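/- arXiv:2011.13712 — 10 statements merged into one kernel-verified Lean document; each statement's English description precedes it below -/
import Mathlib

section
/- For every α ∈ [0,1), every a ∈ ℂ, every γ ∈ ℝ and every energy E > 0, the transmission and reflection coefficients of the type-II_a transmission protocol satisfy T(α,a,γ,E) + R(α,a,γ,E) = 1 (conservation of the scattered flux). -/
open Filter Topology

/-- The denominator `D(α,a,γ,E)` of the scattering amplitudes for the type-`II_a`
transmission protocol across the Grushin singularity. -/
noncomputable def Dcoef (α : ℝ) (a : ℂ) (γ E : ℝ) : ℂ :=
  ((E ^ ((1 + α) / 2) * Real.Gamma ((1 - α) / 2) * (1 + ‖a‖ ^ 2) : ℝ) : ℂ)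
    + Complex.I * (γ : ℂ) * (((2 : ℝ) ^ (1 + α) : ℝ) : ℂ)
      * Complex.exp (Complex.I * (Real.pi : ℂ) * (α : ℂ) / 2)
      * ((Real.Gamma ((3 + α) / 2) : ℝ) : ℂ)

/-- The transmission coefficient `T(α,a,γ,E)`. -/
noncomputable def Tcoef (α : ℝ) (a : ℂ) (γ E : ℝ) : ℝ :=
  ‖((E ^ ((1 + α) / 2) * Real.Gamma ((1 - α) / 2) : ℝ) : ℂ)
      * (1 + Complex.exp (Complex.I * (Real.pi : ℂ) * (α : ℂ)))
      * (starRingEnd ℂ a) / Dcoef α a γ E‖ ^ 2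

/-- The reflection coefficient `R(α,a,γ,E)`. -/
noncomputable def Rcoef (α : ℝ) (a : ℂ) (γ E : ℝ) : ℝ :=
  ‖(((E ^ ((1 + α) / 2) * Real.Gamma ((1 - α) / 2) : ℝ) : ℂ)
      * (1 - ((‖a‖ ^ 2 : ℝ) : ℂ) * Complex.exp (Complex.I * (Real.pi : ℂ) * (α : ℂ)))
      + Complex.I * (γ : ℂ) * (((2 : ℝ) ^ (1 + α) : ℝ) : ℂ)
        * Complex.exp (Complex.I * (Real.pi : ℂ) * (α : ℂ) / 2)
        * ((Real.Gamma ((3 + α) / 2) : ℝ) : ℂ)) / Dcoef α a γ E‖ ^ 2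

/-!
Put `g = E^((1+α)/2) Γ((1-α)/2) > 0`, `c = γ 2^(1+α) Γ((3+α)/2) ∈ ℝ` and `w = e^(iπα/2)`, so that
`e^(iπα) = w²` and `D = g(1 + |a|²) + icw`. Then `T = |t/D|²` and `R = |r/D|²` with
`|t|² + |r|² = |D|²`, a polynomial identity in the real and imaginary parts once `|w| = 1`.
Finally `D ≠ 0`: `Im D = c cos(πα/2)` with `cos(πα/2) > 0` forces `c = 0`, and then
`D = g(1 + |a|²) ≠ 0`.
-/

open Complex in
lemma norm_sq_transmission_add_norm_sq_reflection (g c : ℝ) (a w : ℂ) (hw : ‖w‖ = 1) :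
    ‖(g : ℂ) * (1 + w ^ 2) * starRingEnd ℂ a‖ ^ 2
      + ‖(g : ℂ) * (1 - ((‖a‖ ^ 2 : ℝ) : ℂ) * w ^ 2) + I * c * w‖ ^ 2
      = ‖((g * (1 + ‖a‖ ^ 2) : ℝ) : ℂ) + I * c * w‖ ^ 2 := by
  have hw' : normSq w = 1 := by rw [normSq_eq_norm_sq, hw, one_pow]
  simp only [Complex.sq_norm]
  simp only [normSq_apply, add_re, add_im, mul_re, mul_im, one_re, one_im,
    sub_re, sub_im, ofReal_re, ofReal_im, I_re, I_im, conj_re, conj_im, pow_two] at hw' ⊢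
  linear_combination (g ^ 2 * (a.re ^ 2 + a.im ^ 2) * (1 + a.re ^ 2 + a.im ^ 2)
    * (w.re ^ 2 + w.im ^ 2 + 1) - 2 * c * g * (a.re ^ 2 + a.im ^ 2) * w.im) * hw'

open Complex in
lemma ofReal_mul_one_add_norm_sq_add_I_mul_ne_zero {g : ℝ} (hg : g ≠ 0) (c : ℝ) (a : ℂ)
    {w : ℂ} (hw : w.re ≠ 0) : ((g * (1 + ‖a‖ ^ 2) : ℝ) : ℂ) + I * c * w ≠ 0 := by
  intro h
  have him := congrArg im h
  have hre := congrArg re h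
  simp only [add_re, add_im, mul_re, mul_im, ofReal_re, ofReal_im, I_re, I_im,
    zero_re, zero_im] at him hre
  have hc : c = 0 := by
    have : c * w.re = 0 := by linarith
    exact (mul_eq_zero.1 this).resolve_right hw
  subst hc
  have : g * (1 + ‖a‖ ^ 2) ≠ 0 := mul_ne_zero hg (by positivity)
  exact this (by linarith)

lemma norm_div_sq_add_norm_div_sq_eq_one {𝕜 : Type*} [NormedDivisionRing 𝕜] {t r d : 𝕜}
    (h : ‖t‖ ^ 2 + ‖r‖ ^ 2 = ‖d‖ ^ 2) (hd : d ≠ 0) : ‖t / d‖ ^ 2 + ‖r / d‖ ^ 2 = 1 := by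
  rw [norm_div, norm_div, div_pow, div_pow, ← add_div, h, div_self (by positivity)]

/-- conservation of the scattered flux `T + R = 1` for the type-`II_a`
transmission protocol. -/
theorem flux_conservation (α : ℝ) (hα : α ∈ Set.Ico (0 : ℝ) 1) (a : ℂ) (γ : ℝ)
    (E : ℝ) (hE : 0 < E) :
    Tcoef α a γ E + Rcoef α a γ E = 1 := by
  obtain ⟨hα0, hα1⟩ := hα
  set g : ℝ := E ^ ((1 + α) / 2) * Real.Gamma ((1 - α) / 2)
  set c : ℝ := γ * 2 ^ (1 + α) * Real.Gamma ((3 + α) / 2)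
  set w : ℂ := Complex.exp (Complex.I * Real.pi * α / 2)
  have hw_eq : w = Complex.exp ((Real.pi * α / 2 : ℝ) * Complex.I) := by
    simp only [w]; push_cast; ring_nf
  have hg : g ≠ 0 :=
    (mul_pos (Real.rpow_pos_of_pos hE _) (Real.Gamma_pos_of_pos (by linarith))).ne'
  have hw_re : w.re ≠ 0 := by
    rw [hw_eq, Complex.exp_ofReal_mul_I_re]
    exact (Real.cos_pos_of_mem_Ioo ⟨by nlinarith [Real.pi_pos], by nlinarith [Real.pi_pos]⟩).ne'
  have hw_sq : Complex.exp (Complex.I * Real.pi * α) = w ^ 2 := by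
    rw [← Complex.exp_nat_mul]; ring_nf
  have hc : Complex.I * γ * ((2 ^ (1 + α) : ℝ) : ℂ) * w * (Real.Gamma ((3 + α) / 2) : ℂ)
      = Complex.I * c * w := by
    simp only [c]; push_cast; ring
  rw [Tcoef, Rcoef, Dcoef, hw_sq, hc]
  refine norm_div_sq_add_norm_div_sq_eq_one ?_
    (ofReal_mul_one_add_norm_sq_add_I_mul_ne_zero hg c a hw_re)
  exact norm_sq_transmission_add_norm_sq_reflection g c a w
    (by rw [hw_eq, Complex.norm_exp_ofReal_mul_I])
end

section
/- Let α ∈ [0,1), E > 0 and ν := (1+α)/2, and define u(x) := √x · K_ν(x√E) for x > 0. Then u is twice differentiable on (0,∞) and satisfies the eigenvalue equation −u''(x) + (α(2+α)/(4x²))·u(x) = −E·u(x) for every x > 0 (i.e., u is a generalised eigenfunction at energy −E of the zero-mode fibre operator −d²/dx² + α(2+α)/(4x²)). -/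
/-!
Differentiating under the integral sign, `∫₀^∞ (-cosh t)ᵏ e^{-x cosh t} cosh (νt) dt` is the
`k`-th derivative of `K_ν`; the integrand decays like `exp (-(x/2) eᵗ)`, which dominates every
exponential. The combination `x² K_ν'' + x K_ν' - (x² + ν²) K_ν` is then the integral over
`(0, ∞)` of the `t`-derivative of the Wronskian of `e^{-x cosh t}` and `cosh (νt)`, which vanishes
at `t = 0` and at `∞`, so `K_ν` solves Bessel's modified equation. The Liouville substitution
`u x = √x K_ν (c x)` turns that equation into `u'' = ((ν² - 1/4) / x² + c²) u`, and
`ν² - 1/4 = α (2 + α) / 4` for `ν = (1 + α) / 2`.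
-/

open Filter Topology MeasureTheory

/-- The modified Bessel function of the second kind `K_ν(x)`, for `x > 0`, defined by
the integral representation `K_ν(x) = ∫₀^∞ exp(−x cosh t) cosh(ν t) dt`. -/
noncomputable def besselK (ν x : ℝ) : ℝ :=
  ∫ t in Set.Ioi (0 : ℝ), Real.exp (-x * Real.cosh t) * Real.cosh (ν * t)

open Real Set

lemma mul_sub_mul_exp_le_sq_div (a : ℝ) {b t : ℝ} (hb : 0 < b) (ht : 0 ≤ t) :
    a * t - b * exp t ≤ a ^ 2 / (2 * b) := by
  have hexp := quadratic_le_exp_of_nonneg ht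
  rw [le_div_iff₀ (by positivity)]
  nlinarith [sq_nonneg (b * t - a), mul_le_mul_of_nonneg_left hexp (sq_nonneg b),
    mul_nonneg (sq_nonneg b) ht]

lemma cosh_le_exp_abs (x : ℝ) : cosh x ≤ exp |x| := by
  rw [← cosh_abs, cosh_eq]
  linarith [exp_le_exp.2 (neg_le_self (abs_nonneg x))]

lemma exp_le_two_mul_cosh (x : ℝ) : exp x ≤ 2 * cosh x := by
  rw [cosh_eq]
  linarith [exp_pos (-x)]

lemma abs_sinh_le_cosh (x : ℝ) : |sinh x| ≤ cosh x := by
  rw [abs_sinh, ← cosh_abs]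
  exact (sinh_lt_cosh _).le

noncomputable def besselKIntegrand (ν : ℝ) (k : ℕ) (x t : ℝ) : ℝ :=
  (-cosh t) ^ k * (exp (-x * cosh t) * cosh (ν * t))

noncomputable def besselKDeriv (ν : ℝ) (k : ℕ) (x : ℝ) : ℝ :=
  ∫ t in Ioi 0, besselKIntegrand ν k x t

lemma besselKDeriv_zero (ν : ℝ) : besselKDeriv ν 0 = besselK ν := by
  ext x
  simp [besselKDeriv, besselKIntegrand, besselK]

section Integrand

variable (ν : ℝ) (k : ℕ) {x : ℝ}

@[fun_prop]
lemma continuous_besselKIntegrand (x : ℝ) : Continuous (besselKIntegrand ν k x) := by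
  unfold besselKIntegrand
  fun_prop

lemma norm_besselKIntegrand (x t : ℝ) :
    ‖besselKIntegrand ν k x t‖ = cosh t ^ k * (exp (-x * cosh t) * cosh (ν * t)) := by
  rw [besselKIntegrand, norm_mul, norm_pow, norm_neg, norm_of_nonneg (cosh_pos t).le,
    norm_of_nonneg (by positivity)]

lemma norm_besselKIntegrand_anti {y : ℝ} (hxy : x ≤ y) (t : ℝ) :
    ‖besselKIntegrand ν k y t‖ ≤ ‖besselKIntegrand ν k x t‖ := by
  simp only [norm_besselKIntegrand]
  gcongr

lemma norm_besselKIntegrand_le (hx : 0 < x) {t : ℝ} (ht : 0 ≤ t) :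
    ‖besselKIntegrand ν k x t‖ ≤ exp ((k + |ν| + 1) ^ 2 / x) * exp (-t) := by
  have hpow : cosh t ^ k ≤ exp (k * t) := by
    rw [exp_nat_mul]
    gcongr
    simpa [abs_of_nonneg ht] using cosh_le_exp_abs t
  have hν : cosh (ν * t) ≤ exp (|ν| * t) := by
    simpa [abs_mul, abs_of_nonneg ht] using cosh_le_exp_abs (ν * t)
  have hdecay : exp (-x * cosh t) ≤ exp (-(x / 2) * exp t) := by
    refine exp_le_exp.2 ?_
    nlinarith [exp_le_two_mul_cosh t]
  have hkey := mul_sub_mul_exp_le_sq_div (k + |ν| + 1) (half_pos hx) ht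
  rw [norm_besselKIntegrand]
  calc cosh t ^ k * (exp (-x * cosh t) * cosh (ν * t))
      ≤ exp (k * t) * (exp (-(x / 2) * exp t) * exp (|ν| * t)) := by gcongr
    _ = exp ((k + |ν| + 1) * t - x / 2 * exp t) * exp (-t) := by
        rw [← exp_add, ← exp_add, ← exp_add]; congr 1; ring
    _ ≤ exp ((k + |ν| + 1) ^ 2 / x) * exp (-t) := by
        gcongr
        rwa [mul_div_cancel₀ _ two_ne_zero] at hkey

lemma integrableOn_besselKIntegrand (hx : 0 < x) :
    IntegrableOn (besselKIntegrand ν k x) (Ioi 0) := by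
  refine ((exp_neg_integrableOn_Ioi 0 one_pos).const_mul
    (exp ((k + |ν| + 1) ^ 2 / x))).mono' (by fun_prop) ?_
  filter_upwards [ae_restrict_mem measurableSet_Ioi] with t ht
  simpa using norm_besselKIntegrand_le ν k hx (le_of_lt ht)

lemma hasDerivAt_besselKIntegrand (x t : ℝ) :
    HasDerivAt (besselKIntegrand ν k · t) (besselKIntegrand ν (k + 1) x t) x := by
  have hlin : HasDerivAt (fun y => -y * cosh t) (-cosh t) x := by
    simpa using (hasDerivAt_neg x).mul_const (cosh t)
  refine ((hlin.exp.mul_const (cosh (ν * t))).const_mul ((-cosh t) ^ k)).congr_deriv ?_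
  simp only [besselKIntegrand]
  ring

lemma hasDerivAt_besselKDeriv (hx : 0 < x) :
    HasDerivAt (besselKDeriv ν k) (besselKDeriv ν (k + 1) x) x := by
  have hball : Metric.ball x (x / 2) ∈ 𝓝 x := Metric.ball_mem_nhds x (half_pos hx)
  have hhalf : ∀ y ∈ Metric.ball x (x / 2), x / 2 ≤ y := fun y hy => by
    linarith [(abs_lt.1 (mem_ball_iff_norm.1 hy)).1]
  exact (hasDerivAt_integral_of_dominated_loc_of_deriv_le hball
    (Eventually.of_forall fun y => (continuous_besselKIntegrand ν k y).aestronglyMeasurable)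
    (integrableOn_besselKIntegrand ν k hx)
    (continuous_besselKIntegrand ν (k + 1) x).aestronglyMeasurable
    (Eventually.of_forall fun t y hy => norm_besselKIntegrand_anti ν (k + 1) (hhalf y hy) t)
    (integrableOn_besselKIntegrand ν (k + 1) (half_pos hx)).norm
    (Eventually.of_forall fun t y _ => hasDerivAt_besselKIntegrand ν k y t)).2

end Integrand

/-- The Wronskian in `t` of `exp (-x cosh t)` and `cosh (ν t)`. -/
noncomputable def expCoshWronskian (ν x t : ℝ) : ℝ :=
  -x * sinh t * exp (-x * cosh t) * cosh (ν * t) - exp (-x * cosh t) * (ν * sinh (ν * t))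

section Wronskian

variable (ν : ℝ) {x : ℝ}

lemma hasDerivAt_expCoshWronskian (x t : ℝ) :
    HasDerivAt (expCoshWronskian ν x)
      (x ^ 2 * besselKIntegrand ν 2 x t + x * besselKIntegrand ν 1 x t -
        (x ^ 2 + ν ^ 2) * besselKIntegrand ν 0 x t) t := by
  have hνt : HasDerivAt (ν * ·) ν t := by simpa using (hasDerivAt_id t).const_mul ν
  have hexp : HasDerivAt (fun t => exp (-x * cosh t)) (exp (-x * cosh t) * (-x * sinh t)) t :=
    ((hasDerivAt_cosh t).const_mul (-x)).exp
  have hsinh : HasDerivAt (fun t => -x * sinh t) (-x * cosh t) t :=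
    (hasDerivAt_sinh t).const_mul (-x)
  refine (((hsinh.mul hexp).mul hνt.cosh).sub (hexp.mul (hνt.sinh.const_mul ν))).congr_deriv ?_
  simp only [besselKIntegrand, Pi.mul_apply]
  linear_combination x ^ 2 * exp (-x * cosh t) * cosh (ν * t) * sinh_sq t

lemma expCoshWronskian_zero : expCoshWronskian ν x 0 = 0 := by
  simp [expCoshWronskian]

lemma norm_expCoshWronskian_le (hx : 0 < x) (t : ℝ) :
    ‖expCoshWronskian ν x t‖ ≤ (x + |ν|) * ‖besselKIntegrand ν 1 x t‖ := by
  have hsinh := abs_sinh_le_cosh t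
  have hsinhν : |sinh (ν * t)| ≤ cosh t * cosh (ν * t) :=
    (abs_sinh_le_cosh _).trans (le_mul_of_one_le_left (cosh_pos _).le (one_le_cosh t))
  have hg := (exp_pos (-x * cosh t)).le
  have hcν := (cosh_pos (ν * t)).le
  rw [norm_besselKIntegrand, pow_one, expCoshWronskian, norm_eq_abs]
  refine (abs_sub _ _).trans ?_
  simp only [abs_mul, abs_neg, abs_of_pos hx, abs_of_nonneg hg, abs_of_nonneg hcν]
  nlinarith [mul_le_mul_of_nonneg_left hsinh (mul_nonneg (mul_nonneg hx.le hg) hcν),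
    mul_le_mul_of_nonneg_left hsinhν (mul_nonneg (abs_nonneg ν) hg)]

lemma tendsto_expCoshWronskian_atTop (hx : 0 < x) :
    Tendsto (expCoshWronskian ν x) atTop (𝓝 0) := by
  refine tendsto_zero_of_hasDerivAt_of_integrableOn_Ioi (a := 0)
    (fun t _ => hasDerivAt_expCoshWronskian ν x t) ?_ ?_
  · exact (((integrableOn_besselKIntegrand ν 2 hx).const_mul _).add
      ((integrableOn_besselKIntegrand ν 1 hx).const_mul _)).sub
      ((integrableOn_besselKIntegrand ν 0 hx).const_mul _)
  · refine ((integrableOn_besselKIntegrand ν 1 hx).norm.const_mul (x + |ν|)).mono'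
      (by unfold expCoshWronskian; fun_prop) ?_
    exact Eventually.of_forall (norm_expCoshWronskian_le ν hx)

end Wronskian

theorem besselK_ode (ν : ℝ) {x : ℝ} (hx : 0 < x) :
    x ^ 2 * besselKDeriv ν 2 x + x * besselKDeriv ν 1 x - (x ^ 2 + ν ^ 2) * besselK ν x = 0 := by
  have hI (c : ℝ) (k : ℕ) : IntegrableOn (fun t => c * besselKIntegrand ν k x t) (Ioi 0) :=
    (integrableOn_besselKIntegrand ν k hx).const_mul c
  have hFTC := integral_Ioi_of_hasDerivAt_of_tendsto' (a := 0)
    (fun t _ => hasDerivAt_expCoshWronskian ν x t) (((hI _ 2).add (hI _ 1)).sub (hI _ 0))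
    (tendsto_expCoshWronskian_atTop ν hx)
  have h21 : IntegrableOn
      (fun t => x ^ 2 * besselKIntegrand ν 2 x t + x * besselKIntegrand ν 1 x t) (Ioi 0) :=
    (hI _ 2).add (hI _ 1)
  rw [integral_sub h21 (hI _ 0), integral_add (hI _ 2) (hI _ 1),
    integral_const_mul, integral_const_mul, integral_const_mul, expCoshWronskian_zero,
    sub_zero] at hFTC
  rwa [← besselKDeriv_zero]

section Liouville

variable {f f' f'' : ℝ → ℝ} {c x : ℝ}

lemma hasDerivAt_sqrt_mul_comp_mul (hf : HasDerivAt f (f' (x * c)) (x * c)) (hx : 0 < x) :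
    HasDerivAt (fun y => √y * f (y * c)) (f (x * c) / (2 * √x) + √x * f' (x * c) * c) x :=
  ((hasDerivAt_sqrt hx.ne').mul (hf.comp x (hasDerivAt_mul_const c))).congr_deriv
    (by simp only [Function.comp_apply]; ring)

lemma hasDerivAt_deriv_sqrt_mul_comp_mul (hc : 0 < c)
    (hf : ∀ y > 0, HasDerivAt f (f' y) y) (hf' : ∀ y > 0, HasDerivAt f' (f'' y) y) (hx : 0 < x) :
    HasDerivAt (deriv fun y => √y * f (y * c))
      (√x * (f'' (x * c) * c ^ 2) + f' (x * c) * c / √x - f (x * c) / (4 * x * √x)) x := by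
  have hderiv : deriv (fun y => √y * f (y * c)) =ᶠ[𝓝 x]
      fun y => f (y * c) / (2 * √y) + √y * f' (y * c) * c := by
    filter_upwards [Ioi_mem_nhds hx] with y hy
    exact (hasDerivAt_sqrt_mul_comp_mul (hf _ (mul_pos hy hc)) hy).deriv
  refine HasDerivAt.congr_of_eventuallyEq ?_ hderiv
  have h₁ := ((hf _ (mul_pos hx hc)).comp x (hasDerivAt_mul_const c)).div
    ((hasDerivAt_sqrt hx.ne').const_mul 2) (by positivity)
  have h₂ := hasDerivAt_sqrt_mul_comp_mul (f := f') (f' := f'') (hf' _ (mul_pos hx hc)) hx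
  refine (h₁.add (h₂.mul_const c)).congr_deriv ?_
  have hs : √x ^ 2 = x := sq_sqrt hx.le
  simp only [Function.comp_apply]
  field_simp
  rw [hs]
  ring

theorem deriv_deriv_sqrt_mul_comp_mul (hc : 0 < c) (ν : ℝ)
    (hf : ∀ y > 0, HasDerivAt f (f' y) y) (hf' : ∀ y > 0, HasDerivAt f' (f'' y) y)
    (hode : ∀ y > 0, y ^ 2 * f'' y + y * f' y - (y ^ 2 + ν ^ 2) * f y = 0) (hx : 0 < x) :
    deriv (deriv fun y => √y * f (y * c)) x =
      ((ν ^ 2 - 1 / 4) / x ^ 2 + c ^ 2) * (√x * f (x * c)) := by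
  rw [(hasDerivAt_deriv_sqrt_mul_comp_mul hc hf hf' hx).deriv]
  have hs : √x ^ 2 = x := sq_sqrt hx.le
  have h := hode _ (mul_pos hx hc)
  field_simp
  rw [hs]
  linear_combination 4 * x * h

end Liouville

theorem besselK_solves_zero_mode_ODE_general (α E : ℝ) (hE : 0 < E) :
    let ν : ℝ := (1 + α) / 2
    let u : ℝ → ℝ := fun x => Real.sqrt x * besselK ν (x * Real.sqrt E)
    ∀ x > (0 : ℝ), DifferentiableAt ℝ u x ∧ DifferentiableAt ℝ (deriv u) x ∧
      -(deriv (deriv u) x) + (α * (2 + α) / (4 * x ^ 2)) * u x = -E * u x := by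
  intro ν u x hx
  have hc : 0 < √E := sqrt_pos.2 hE
  have hK₀ : ∀ y > 0, HasDerivAt (besselK ν) (besselKDeriv ν 1 y) y := fun y hy => by
    rw [← besselKDeriv_zero]
    exact hasDerivAt_besselKDeriv ν 0 hy
  have hK₁ : ∀ y > 0, HasDerivAt (besselKDeriv ν 1) (besselKDeriv ν 2 y) y :=
    fun y hy => hasDerivAt_besselKDeriv ν 1 hy
  refine ⟨(hasDerivAt_sqrt_mul_comp_mul (hK₀ _ (mul_pos hx hc)) hx).differentiableAt,
    (hasDerivAt_deriv_sqrt_mul_comp_mul hc hK₀ hK₁ hx).differentiableAt, ?_⟩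
  rw [deriv_deriv_sqrt_mul_comp_mul hc ν hK₀ hK₁ (fun y hy => besselK_ode ν hy) hx,
    sq_sqrt hE.le]
  field_simp
  ring

/-- `u(x) = √x · K_{(1+α)/2}(x√E)` is a generalised eigenfunction at
energy `−E` of the zero-mode fibre operator `−d²/dx² + α(2+α)/(4x²)` on `(0,∞)`. -/
theorem besselK_solves_zero_mode_ODE (α E : ℝ) (hα : α ∈ Set.Ico (0 : ℝ) 1)
    (hE : 0 < E) :
    let ν : ℝ := (1 + α) / 2
    let u : ℝ → ℝ := fun x => Real.sqrt x * besselK ν (x * Real.sqrt E)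
    ∀ x > (0 : ℝ), DifferentiableAt ℝ u x ∧ DifferentiableAt ℝ (deriv u) x ∧
      -(deriv (deriv u) x) + (α * (2 + α) / (4 * x ^ 2)) * u x = -E * u x :=
  besselK_solves_zero_mode_ODE_general α E hE
end

section
/- For every ν > 0, the modified Bessel function of the second kind has the small-argument behaviour lim_{x→0⁺} x^ν · K_ν(x) = 2^{ν−1}·Γ(ν). -/
/-!
Substituting `u = (x/2) eᵗ` gives `x^ν K_ν(x) = 2^(ν-1) ∫_{x/2}^∞ e^(-u) u^(ν-1) c_x(u) du` with
`c_x(u) = e^(-x²/(4u)) (1 + (x/(2u))^(2ν))`. On `u ≥ x/2` the factor `c_x(u)` lies in `[0, 2]`, and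
it tends to `1` as `x → 0`, so dominated convergence against the Gamma integrand gives the limit
`2^(ν-1) Γ(ν)`.
-/

open Filter Topology MeasureTheory

open Real Set

theorem integral_Ioi_zero_eq_integral_Ioi_inv_smul_log_div {E : Type*} [NormedAddCommGroup E]
    [NormedSpace ℝ E] (f : ℝ → E) {a : ℝ} (ha : 0 < a) :
    ∫ t in Ioi 0, f t = ∫ u in Ioi a, u⁻¹ • f (log (u / a)) := by
  have hscale := integral_comp_mul_left_Ioi (fun s ↦ s⁻¹ • f (log s)) a (inv_pos.2 ha)
  rw [inv_mul_cancel₀ ha.ne', integral_comp_log_Ioi f one_pos, log_one, inv_inv] at hscale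
  rw [← inv_smul_smul₀ ha.ne' (∫ t in Ioi 0, f t), ← hscale, ← integral_smul]
  refine setIntegral_congr_fun measurableSet_Ioi fun u _ ↦ ?_
  simp only [smul_smul, div_eq_inv_mul]
  congr 1
  field_simp

theorem cosh_mul_log {y : ℝ} (hy : 0 < y) (ν : ℝ) :
    cosh (ν * log y) = (y ^ ν + (y ^ ν)⁻¹) / 2 := by
  rw [← log_rpow hy, cosh_log (rpow_pos_of_pos hy ν)]

noncomputable def besselKCorrection (ν x u : ℝ) : ℝ :=
  exp (-(x ^ 2 / (4 * u))) * (1 + ((x / (2 * u)) ^ ν) ^ 2)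

theorem besselKCorrection_nonneg (ν x u : ℝ) : 0 ≤ besselKCorrection ν x u := by
  unfold besselKCorrection
  positivity

theorem besselKCorrection_le_two {ν x u : ℝ} (hν : 0 ≤ ν) (hx : 0 ≤ x) (hxu : x ≤ 2 * u) :
    besselKCorrection ν x u ≤ 2 := by
  have hu : 0 ≤ u := by linarith
  have hexp : exp (-(x ^ 2 / (4 * u))) ≤ 1 := exp_le_one_iff.2 (by simp; positivity)
  have hpow : ((x / (2 * u)) ^ ν) ^ 2 ≤ 1 :=
    pow_le_one₀ (by positivity)
      (rpow_le_one (by positivity) (div_le_one_of_le₀ hxu (by positivity)) hν)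
  unfold besselKCorrection
  nlinarith [exp_pos (-(x ^ 2 / (4 * u)))]

theorem tendsto_besselKCorrection {ν : ℝ} (hν : 0 < ν) (u : ℝ) :
    Tendsto (fun x ↦ besselKCorrection ν x u) (𝓝 0) (𝓝 1) := by
  have hcont : ContinuousAt (fun x ↦ besselKCorrection ν x u) 0 := by
    have hpow : ContinuousAt (fun x : ℝ ↦ (x / (2 * u)) ^ ν) 0 :=
      ContinuousAt.rpow_const (by fun_prop) (Or.inr hν.le)
    unfold besselKCorrection
    fun_prop
  simpa [besselKCorrection, zero_rpow hν.ne'] using hcont.tendsto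

theorem rpow_mul_besselK_eq (ν : ℝ) {x : ℝ} (hx : 0 < x) :
    x ^ ν * besselK ν x =
      2 ^ (ν - 1) * ∫ u in Ioi (x / 2), exp (-u) * u ^ (ν - 1) * besselKCorrection ν x u := by
  rw [besselK, integral_Ioi_zero_eq_integral_Ioi_inv_smul_log_div _ (half_pos hx),
    ← integral_const_mul, ← integral_const_mul]
  refine setIntegral_congr_fun measurableSet_Ioi fun u (hu : x / 2 < u) ↦ ?_
  have hu₀ : 0 < u := (half_pos hx).trans hu
  have hinv : u / (x / 2) = (x / (2 * u))⁻¹ := by field_simp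
  have hexp : exp (-x * ((u / (x / 2) + (u / (x / 2))⁻¹) / 2)) =
      exp (-u) * exp (-(x ^ 2 / (4 * u))) := by
    rw [← exp_add]
    congr 1
    field_simp
    ring
  have hxν : x ^ ν = 2 ^ ν * u ^ ν * (x / (2 * u)) ^ ν := by
    rw [← mul_rpow (by norm_num) hu₀.le, ← mul_rpow (by positivity) (by positivity)]
    congr 1
    field_simp
  rw [cosh_log (by positivity), cosh_mul_log (by positivity), hexp, smul_eq_mul,
    besselKCorrection, hinv, inv_rpow (by positivity), inv_inv, hxν, rpow_sub_one (by norm_num),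
    rpow_sub_one hu₀.ne']
  field_simp

theorem tendsto_setIntegral_Ioi_half_mul_besselKCorrection {ν : ℝ} (hν : 0 < ν) {g : ℝ → ℝ}
    (hg : IntegrableOn g (Ioi 0)) :
    Tendsto (fun x ↦ ∫ u in Ioi (x / 2), g u * besselKCorrection ν x u) (𝓝[>] 0)
      (𝓝 (∫ u in Ioi 0, g u)) := by
  set F : ℝ → ℝ → ℝ := fun x ↦ (Ioi (x / 2)).indicator fun u ↦ g u * besselKCorrection ν x u
  have hF : ∀ᶠ x in 𝓝[>] 0,
      ∫ u in Ioi 0, F x u = ∫ u in Ioi (x / 2), g u * besselKCorrection ν x u := by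
    filter_upwards [self_mem_nhdsWithin] with x hx
    rw [setIntegral_indicator measurableSet_Ioi, Ioi_inter_Ioi, sup_eq_right.2 (half_pos hx).le]
  refine (tendsto_integral_filter_of_dominated_convergence (fun u ↦ 2 * ‖g u‖) ?_ ?_
    (hg.norm.const_mul 2) ?_).congr' hF
  · refine .of_forall fun x ↦ (hg.aestronglyMeasurable.mul ?_).indicator measurableSet_Ioi
    have hmeas : Measurable (besselKCorrection ν x) := by
      unfold besselKCorrection
      fun_prop
    exact hmeas.aestronglyMeasurable
  · filter_upwards [self_mem_nhdsWithin] with x (hx : 0 < x)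
    refine .of_forall fun u ↦ ?_
    dsimp only [F]
    by_cases hu : u ∈ Ioi (x / 2)
    · have hxu : x ≤ 2 * u := by linarith [mem_Ioi.1 hu]
      rw [indicator_of_mem hu, norm_mul, norm_of_nonneg (besselKCorrection_nonneg ν x u),
        mul_comm]
      gcongr
      exact besselKCorrection_le_two hν.le hx.le hxu
    · rw [indicator_of_notMem hu, norm_zero]
      positivity
  · filter_upwards [ae_restrict_mem measurableSet_Ioi] with u (hu : 0 < u)
    have hlim := ((tendsto_besselKCorrection hν u).const_mul (g u)).mono_left
      (nhdsWithin_le_nhds (s := Ioi 0))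
    rw [mul_one] at hlim
    refine hlim.congr' ?_
    filter_upwards [Ioo_mem_nhdsGT (by positivity : (0 : ℝ) < 2 * u)] with x hx
    have hux : u ∈ Ioi (x / 2) := mem_Ioi.2 (by linarith [hx.2])
    simp only [F, indicator_of_mem hux]

/-- small-argument behaviour of `K_ν`:
`x^ν K_ν(x) → 2^{ν−1} Γ(ν)` as `x → 0⁺`, for every `ν > 0`. -/
theorem besselK_small_argument (ν : ℝ) (hν : 0 < ν) :
    Tendsto (fun x : ℝ => x ^ ν * besselK ν x) (𝓝[>] 0)
      (𝓝 ((2 : ℝ) ^ (ν - 1) * Real.Gamma ν)) := by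
  rw [Gamma_eq_integral hν]
  refine ((tendsto_setIntegral_Ioi_half_mul_besselKCorrection hν
    (GammaIntegral_convergent hν)).const_mul _).congr' ?_
  filter_upwards [self_mem_nhdsWithin] with x (hx : 0 < x)
  rw [rpow_mul_besselK_eq ν hx]
end

section
/- For every ν ∈ (0,1), the second-order small-argument behaviour of the modified Bessel function of the second kind holds: lim_{x→0⁺} x^{−ν}·( K_ν(x) − 2^{ν−1}·Γ(ν)·x^{−ν} ) = 2^{−ν−1}·Γ(−ν). -/
open Filter Topology MeasureTheory

/-!
With `a = x / 2`, evenness gives `2 K_ν(x) = ∫ exp (-a eᵗ - a e⁻ᵗ) e^{νt} dt` over `ℝ`. Dropping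
the factor `exp (-a e⁻ᵗ)` leaves `a^{-ν} Γ(ν)`, the leading term. The substitution
`t ↦ log a - r` turns the remainder into `a^ν ∫ exp (-a² e⁻ʳ) (exp (-eʳ) - 1) e^{-νr} dr`, and by
dominated convergence this integral tends to `∫ (exp (-eʳ) - 1) e^{-νr} dr`, which one integration
by parts identifies with `-Γ(1 - ν) / ν = Γ(-ν)`.
-/

open Real Set

theorem integral_Ioi_eq_integral_exp_smul_comp_exp {E : Type*} [NormedAddCommGroup E]
    [NormedSpace ℝ E] (g : ℝ → E) : ∫ y in Ioi 0, g y = ∫ t, exp t • g (exp t) := by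
  simpa [range_exp, abs_of_pos (exp_pos _)] using
    integral_image_eq_integral_abs_deriv_smul MeasurableSet.univ
      (fun t _ => (hasDerivAt_exp t).hasDerivWithinAt) exp_injective.injOn g

theorem Real.Gamma_eq_integral_exp_neg_exp {s : ℝ} (hs : 0 < s) :
    Gamma s = ∫ t, exp (-exp t) * exp (s * t) := by
  rw [Gamma_eq_integral hs, integral_Ioi_eq_integral_exp_smul_comp_exp]
  congr 1 with t
  rw [smul_eq_mul, ← exp_mul, mul_left_comm, ← exp_add]
  ring_nf

theorem integral_exp_neg_mul_exp_mul_exp {a s : ℝ} (ha : 0 < a) (hs : 0 < s) :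
    ∫ t, exp (-a * exp t) * exp (s * t) = a ^ (-s) * Gamma s := by
  rw [Gamma_eq_integral_exp_neg_exp hs, ← integral_const_mul,
    ← integral_sub_right_eq_self _ (log a)]
  congr 1 with t
  rw [exp_sub, exp_log ha, mul_sub, exp_sub, rpow_def_of_pos ha, mul_neg, exp_neg,
    mul_comm (log a)]
  field_simp

theorem integrable_exp_neg_mul_exp_mul_exp {a s : ℝ} (ha : 0 < a) (hs : 0 < s) :
    Integrable fun t => exp (-a * exp t) * exp (s * t) :=
  Integrable.of_integral_ne_zero <| by
    rw [integral_exp_neg_mul_exp_mul_exp ha hs]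
    exact (mul_pos (rpow_pos_of_pos ha _) (Gamma_pos_of_pos hs)).ne'

theorem integrable_one_sub_exp_neg_exp_mul_exp_neg_mul {ν : ℝ} (hν0 : 0 < ν) (hν1 : ν < 1) :
    Integrable fun t => (1 - exp (-exp t)) * exp (-ν * t) := by
  have hmeas : AEStronglyMeasurable (fun t => (1 - exp (-exp t)) * exp (-ν * t)) volume :=
    (by fun_prop : Continuous _).aestronglyMeasurable
  have hnorm (t : ℝ) : ‖(1 - exp (-exp t)) * exp (-ν * t)‖ = (1 - exp (-exp t)) * exp (-ν * t) :=
    norm_of_nonneg <| mul_nonneg (by simp [exp_nonneg]) (exp_nonneg _)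
  rw [← integrableOn_univ, ← Iic_union_Ioi (a := (0 : ℝ)), integrableOn_union]
  constructor
  · refine (integrableOn_exp_mul_Iic (a := 1 - ν) (by linarith) 0).mono' hmeas.restrict ?_
    refine (ae_restrict_iff' measurableSet_Iic).mpr (ae_of_all _ fun t _ => ?_)
    rw [hnorm, show (1 - ν) * t = t + -ν * t by ring, exp_add]
    gcongr
    linarith [add_one_le_exp (-exp t)]
  · refine (integrableOn_exp_mul_Ioi (a := -ν) (by linarith) 0).mono' hmeas.restrict ?_
    refine (ae_restrict_iff' measurableSet_Ioi).mpr (ae_of_all _ fun t _ => ?_)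
    rw [hnorm]
    exact mul_le_of_le_one_left (exp_nonneg _) (by linarith [exp_nonneg (-exp t)])

theorem integral_exp_neg_exp_sub_one_mul_exp_neg_mul {ν : ℝ} (hν0 : 0 < ν) (hν1 : ν < 1) :
    ∫ t, (exp (-exp t) - 1) * exp (-ν * t) = Gamma (-ν) := by
  set u : ℝ → ℝ := fun t => exp (-exp t) - 1
  set u' : ℝ → ℝ := fun t => -exp t * exp (-exp t)
  set v : ℝ → ℝ := fun t => exp (-ν * t) * -ν⁻¹
  set v' : ℝ → ℝ := fun t => exp (-ν * t)
  have hu (t : ℝ) : HasDerivAt u (u' t) t := by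
    simpa [u, u', mul_comm] using ((hasDerivAt_exp t).neg.exp).sub_const 1
  have hv (t : ℝ) : HasDerivAt v (v' t) t := by
    refine ((((hasDerivAt_id t).const_mul (-ν)).exp.mul_const (-ν⁻¹))).congr_deriv ?_
    simp [v', hν0.ne']
  have hdom := integrable_one_sub_exp_neg_exp_mul_exp_neg_mul hν0 hν1
  have huv : Integrable (u * v) := by
    convert hdom.div_const ν using 1
    ext t; simp only [u, v, Pi.mul_apply]; ring
  have huv' : Integrable (u * v') := by
    convert hdom.neg using 1
    ext t; simp only [u, v', Pi.mul_apply, Pi.neg_apply]; ring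
  have hu'v_eq : u' * v = fun t => exp (-1 * exp t) * exp ((1 - ν) * t) / ν := by
    ext t
    simp only [u', v, Pi.mul_apply]
    rw [show (1 - ν) * t = t + -ν * t by ring, exp_add]
    ring_nf
  have hu'v : Integrable (u' * v) := by
    rw [hu'v_eq]
    exact (integrable_exp_neg_mul_exp_mul_exp one_pos (by linarith)).div_const ν
  have hGamma : Gamma (1 - ν) = -ν * Gamma (-ν) := by
    rw [← Gamma_add_one (neg_ne_zero.mpr hν0.ne'), neg_add_eq_sub]
  calc ∫ t, u t * v' t = -∫ t, u' t * v t :=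
        integral_mul_deriv_eq_deriv_mul_of_integrable (fun t _ => hu t) (fun t _ => hv t)
          huv' hu'v huv
    _ = -(Gamma (1 - ν) / ν) := by
        rw [← Pi.mul_def, hu'v_eq, integral_div,
          integral_exp_neg_mul_exp_mul_exp one_pos (by linarith), one_rpow, one_mul]
    _ = Gamma (-ν) := by rw [hGamma]; field_simp

theorem integral_Ioi_add_comp_neg {E : Type*} [NormedAddCommGroup E] [NormedSpace ℝ E]
    {f : ℝ → E} (hf : Integrable f) : ∫ t in Ioi 0, (f t + f (-t)) = ∫ t, f t := by
  rw [integral_add hf.integrableOn hf.comp_neg.integrableOn, integral_comp_neg_Ioi, neg_zero,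
    add_comm, intervalIntegral.integral_Iic_add_Ioi hf.integrableOn hf.integrableOn]

theorem exp_neg_mul_cosh (x t : ℝ) :
    exp (-x * cosh t) = exp (-(x / 2) * exp t) * exp (-(x / 2) * exp (-t)) := by
  rw [cosh_eq, ← exp_add]
  ring_nf

theorem besselK_eq_integral_div_two {ν x : ℝ}
    (hf : Integrable fun t => exp (-x * cosh t) * exp (ν * t)) :
    besselK ν x = (∫ t, exp (-x * cosh t) * exp (ν * t)) / 2 := by
  rw [← integral_Ioi_add_comp_neg hf, ← integral_div, besselK]
  congr 1 with t
  rw [cosh_eq (ν * t), cosh_neg, mul_neg]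
  ring

theorem integrable_exp_neg_mul_cosh_mul_exp {ν x : ℝ} (hx : 0 < x) (hν : 0 < ν) :
    Integrable fun t => exp (-x * cosh t) * exp (ν * t) := by
  refine (integrable_exp_neg_mul_exp_mul_exp (half_pos hx) hν).mono
    (by fun_prop : Continuous _).aestronglyMeasurable (ae_of_all _ fun t => ?_)
  rw [norm_of_nonneg (by positivity), norm_of_nonneg (by positivity), exp_neg_mul_cosh]
  gcongr
  exact mul_le_of_le_one_right (exp_nonneg _) <| exp_le_one_iff.mpr <| by
    nlinarith [exp_pos (-t)]

theorem integral_exp_neg_mul_cosh_mul_exp_sub {ν x : ℝ} (hx : 0 < x) (hν : 0 < ν) :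
    (∫ t, exp (-x * cosh t) * exp (ν * t)) - (x / 2) ^ (-ν) * Gamma ν =
      (x / 2) ^ ν * ∫ r, exp (-(x / 2) ^ 2 * exp (-r)) * ((exp (-exp r) - 1) * exp (-ν * r)) := by
  set a := x / 2
  have ha : 0 < a := half_pos hx
  set F : ℝ → ℝ := fun t => exp (-a * exp t) * (exp (-a * exp (-t)) - 1) * exp (ν * t)
  have hF : ∀ r, F (-(r - log a)) =
      a ^ ν * (exp (-a ^ 2 * exp (-r)) * ((exp (-exp r) - 1) * exp (-ν * r))) := by
    intro r
    simp only [F, neg_sub, mul_sub, exp_sub, exp_log ha, rpow_def_of_pos ha, neg_mul, exp_neg,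
      mul_comm (log a) ν]
    field_simp
  calc (∫ t, exp (-x * cosh t) * exp (ν * t)) - a ^ (-ν) * Gamma ν
      = ∫ t, F t := by
        rw [← integral_exp_neg_mul_exp_mul_exp ha hν, ← integral_sub
          (integrable_exp_neg_mul_cosh_mul_exp hx hν) (integrable_exp_neg_mul_exp_mul_exp ha hν)]
        congr 1 with t
        rw [exp_neg_mul_cosh]
        ring
    _ = ∫ r, F (-(r - log a)) := by
        rw [integral_sub_right_eq_self (fun r => F (-r)), integral_neg_eq_self]
    _ = _ := by simp only [hF, integral_const_mul]

theorem tendsto_integral_exp_neg_mul_exp_neg_mul {ν : ℝ} (hν0 : 0 < ν) (hν1 : ν < 1) :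
    Tendsto (fun c => ∫ r, exp (-c * exp (-r)) * ((exp (-exp r) - 1) * exp (-ν * r)))
      (𝓝[≥] 0) (𝓝 (Gamma (-ν))) := by
  rw [← integral_exp_neg_exp_sub_one_mul_exp_neg_mul hν0 hν1]
  refine tendsto_integral_filter_of_dominated_convergence _
    (Eventually.of_forall fun c => (by fun_prop : Continuous _).aestronglyMeasurable) ?_
    (integrable_one_sub_exp_neg_exp_mul_exp_neg_mul hν0 hν1) (ae_of_all _ fun r => ?_)
  · filter_upwards [self_mem_nhdsWithin] with c (hc : 0 ≤ c)
    refine ae_of_all _ fun r => ?_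
    rw [norm_mul, norm_mul, norm_of_nonneg (exp_nonneg _), norm_of_nonneg (exp_nonneg _),
      Real.norm_eq_abs, abs_sub_comm, abs_of_nonneg (by simp [exp_nonneg])]
    refine mul_le_of_le_one_left (mul_nonneg (by simp [exp_nonneg]) (exp_nonneg _)) ?_
    exact exp_le_one_iff.mpr <| by nlinarith [exp_pos (-r)]
  · refine tendsto_nhdsWithin_of_tendsto_nhds ?_
    simpa using ((by fun_prop : Continuous fun c => exp (-c * exp (-r)) *
      ((exp (-exp r) - 1) * exp (-ν * r))).tendsto 0)

/-- second-order small-argument behaviour of `K_ν` for `ν ∈ (0,1)`: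
`x^{−ν}(K_ν(x) − 2^{ν−1}Γ(ν)x^{−ν}) → 2^{−ν−1}Γ(−ν)` as `x → 0⁺`. -/
theorem besselK_small_argument_second_order (ν : ℝ) (hν : ν ∈ Set.Ioo (0 : ℝ) 1) :
    Tendsto
      (fun x : ℝ => x ^ (-ν) * (besselK ν x - (2 : ℝ) ^ (ν - 1) * Real.Gamma ν * x ^ (-ν)))
      (𝓝[>] 0) (𝓝 ((2 : ℝ) ^ (-ν - 1) * Real.Gamma (-ν))) := by
  obtain ⟨hν0, hν1⟩ := hν
  have hsq : Tendsto (fun x : ℝ => (x / 2) ^ 2) (𝓝[>] 0) (𝓝[≥] 0) :=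
    tendsto_nhdsWithin_iff.mpr ⟨tendsto_nhdsWithin_of_tendsto_nhds (by
      simpa using ((by fun_prop : Continuous fun x : ℝ => (x / 2) ^ 2).tendsto 0)),
      Eventually.of_forall fun x => sq_nonneg (x / 2)⟩
  refine (((tendsto_integral_exp_neg_mul_exp_neg_mul hν0 hν1).comp hsq).const_mul
    ((2 : ℝ) ^ (-ν - 1))).congr' ?_
  filter_upwards [self_mem_nhdsWithin] with x (hx : 0 < x)
  have ha : 0 < x / 2 := half_pos hx
  have hxν : x ^ (-ν) = (2 ^ ν)⁻¹ * ((x / 2) ^ ν)⁻¹ := by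
    rw [← mul_inv, ← mul_rpow zero_le_two ha.le, mul_div_cancel₀ x two_ne_zero, rpow_neg hx.le]
  have h2ν : (2 : ℝ) ^ (ν - 1) = 2 ^ ν / 2 := rpow_sub_one two_ne_zero ν
  have h2ν' : (2 : ℝ) ^ (-ν - 1) = (2 ^ ν)⁻¹ / 2 := by
    rw [rpow_sub_one two_ne_zero, rpow_neg zero_le_two]
  rw [Function.comp_apply,
    besselK_eq_integral_div_two (integrable_exp_neg_mul_cosh_mul_exp hx hν0),
    eq_add_of_sub_eq' (integral_exp_neg_mul_cosh_mul_exp_sub hx hν0), hxν, h2ν, h2ν',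
    rpow_neg ha.le]
  generalize ∫ r, exp (-(x / 2) ^ 2 * exp (-r)) * ((exp (-exp r) - 1) * exp (-ν * r)) = I
  field_simp
  ring
end

section
/- For every ν ∈ ℝ, the modified Bessel function of the second kind has the large-argument asymptotics lim_{x→+∞} √(2x/π)·e^{x}·K_ν(x) = 1, i.e. K_ν(x) ~ √(π/(2x))·e^{−x} as x → +∞. -/
/-!
The substitution `t = 2 arsinh (v / √(2x))` turns `cosh t` into `1 + v² / x`, so that
`√(2x/π) eˣ K_ν(x) = (2/√π) ∫₀^∞ e^{-v²} cosh (2ν arsinh (v/√(2x))) / √(1 + v²/(2x)) dv`.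
As `x → ∞` the integrand tends to `e^{-v²}`, and `cosh y ≤ exp (y²/2)` dominates it by
`e^{-v²/2}` once `x ≥ 2ν²`; dominated convergence and `∫₀^∞ e^{-v²} = √π/2` give the
limit `1`.
-/

open Filter Topology MeasureTheory

open Real Set

namespace Real

theorem abs_arsinh_le_abs (y : ℝ) : |arsinh y| ≤ |y| := by
  calc |arsinh y| ≤ sinh |arsinh y| := self_le_sinh_iff.2 (abs_nonneg _)
    _ = |y| := by rw [← abs_sinh, sinh_arsinh]

theorem cosh_two_mul_arsinh (y : ℝ) : cosh (2 * arsinh y) = 1 + 2 * y ^ 2 := by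
  rw [cosh_two_mul, cosh_arsinh, sinh_arsinh, sq_sqrt (by positivity)]
  ring

theorem image_two_mul_arsinh_mul_Ioi {c : ℝ} (hc : 0 < c) :
    (fun v => 2 * arsinh (c * v)) '' Ioi 0 = Ioi 0 := by
  ext t
  constructor
  · rintro ⟨v, hv, rfl⟩
    exact mul_pos two_pos (arsinh_pos_iff.2 (mul_pos hc hv))
  · intro ht
    refine ⟨sinh (t / 2) / c, div_pos (sinh_pos_iff.2 (half_pos ht)) hc, ?_⟩
    simp only [mul_div_cancel₀ _ hc.ne', arsinh_sinh]
    ring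

theorem integral_Ioi_eq_integral_Ioi_two_mul_arsinh {E : Type*} [NormedAddCommGroup E]
    [NormedSpace ℝ E] (g : ℝ → E) {c : ℝ} (hc : 0 < c) :
    ∫ t in Ioi 0, g t =
      ∫ v in Ioi 0, (2 * c / √(1 + (c * v) ^ 2)) • g (2 * arsinh (c * v)) := by
  have hderiv (v : ℝ) :
      HasDerivAt (fun v => 2 * arsinh (c * v)) (2 * c / √(1 + (c * v) ^ 2)) v := by
    refine (((hasDerivAt_arsinh _).comp v ((hasDerivAt_id' v).const_mul c)).const_mul 2
      ).congr_deriv ?_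
    field_simp
  have hinj : InjOn (fun v => 2 * arsinh (c * v)) (Ioi 0) := fun a _ b _ hab => by
    simpa [hc.ne'] using hab
  conv_lhs => rw [← image_two_mul_arsinh_mul_Ioi hc]
  rw [integral_image_eq_integral_abs_deriv_smul measurableSet_Ioi
      (fun v _ => (hderiv v).hasDerivWithinAt) hinj]
  refine setIntegral_congr_fun measurableSet_Ioi fun v _ => ?_
  rw [abs_of_pos (by positivity)]

end Real

noncomputable def besselKRescaledIntegrand (ν c v : ℝ) : ℝ :=
  exp (-v ^ 2) * cosh (ν * (2 * arsinh (c * v))) / √(1 + (c * v) ^ 2)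

theorem sqrt_mul_exp_mul_besselK_eq (ν : ℝ) {x : ℝ} (hx : 0 < x) :
    √(2 * x / π) * exp x * besselK ν x
      = 2 / √π * ∫ v in Ioi 0, besselKRescaledIntegrand ν (√(2 * x))⁻¹ v := by
  set s := √(2 * x) with hs
  have hs_pos : 0 < s := sqrt_pos.2 (by positivity)
  have hs_sq : s ^ 2 = 2 * x := sq_sqrt (by positivity)
  rw [besselK, integral_Ioi_eq_integral_Ioi_two_mul_arsinh _ (inv_pos.2 hs_pos),
    ← integral_const_mul, ← integral_const_mul, sqrt_div (by positivity), ← hs]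
  refine setIntegral_congr_fun measurableSet_Ioi fun v _ => ?_
  have hexp : exp (-x * cosh (2 * arsinh (s⁻¹ * v))) = exp (-x) * exp (-v ^ 2) := by
    rw [cosh_two_mul_arsinh, ← exp_add]
    congr 1
    field_simp
    rw [hs_sq]
    ring
  rw [smul_eq_mul, hexp, besselKRescaledIntegrand]
  field_simp
  rw [← exp_add, add_neg_cancel, exp_zero]

theorem continuous_besselKRescaledIntegrand (ν : ℝ) : Continuous fun p : ℝ × ℝ =>
    besselKRescaledIntegrand ν p.1 p.2 := by
  unfold besselKRescaledIntegrand
  have harsinh : Continuous fun p : ℝ × ℝ => arsinh (p.1 * p.2) :=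
    (continuous_fst.mul continuous_snd).arsinh
  refine .div ?_ ?_ fun p => by positivity
  · fun_prop
  · fun_prop

theorem besselKRescaledIntegrand_le {ν c : ℝ} (h : |ν * c| ≤ 1 / 2) (v : ℝ) :
    besselKRescaledIntegrand ν c v ≤ exp (-(1 / 2) * v ^ 2) := by
  have harsinh : (ν * (2 * arsinh (c * v))) ^ 2 / 2 ≤ v ^ 2 / 2 := by
    have h1 : arsinh (c * v) ^ 2 ≤ (c * v) ^ 2 := sq_le_sq.2 (abs_arsinh_le_abs _)
    have h2 : (ν * c) ^ 2 ≤ 1 / 4 := by nlinarith [sq_abs (ν * c), abs_nonneg (ν * c)]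
    nlinarith [sq_nonneg (ν * c), sq_nonneg v, sq_nonneg ν]
  have hcosh : cosh (ν * (2 * arsinh (c * v))) ≤ exp (v ^ 2 / 2) :=
    (cosh_le_exp_half_sq _).trans (exp_le_exp.2 harsinh)
  have hden : 1 ≤ √(1 + (c * v) ^ 2) := one_le_sqrt.2 (by nlinarith [sq_nonneg (c * v)])
  calc besselKRescaledIntegrand ν c v
      ≤ exp (-v ^ 2) * cosh (ν * (2 * arsinh (c * v))) :=
        div_le_self (by positivity) hden
    _ ≤ exp (-v ^ 2) * exp (v ^ 2 / 2) := by gcongr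
    _ = exp (-(1 / 2) * v ^ 2) := by rw [← exp_add]; ring_nf

theorem tendsto_integral_besselKRescaledIntegrand (ν : ℝ) :
    Tendsto (fun c => ∫ v in Ioi 0, besselKRescaledIntegrand ν c v) (𝓝 0) (𝓝 (√π / 2)) := by
  have hcont (c : ℝ) : Continuous (besselKRescaledIntegrand ν c) :=
    (continuous_besselKRescaledIntegrand ν).comp (Continuous.prodMk_right c)
  have hsmall : ∀ᶠ c in 𝓝 (0 : ℝ), |ν * c| ≤ 1 / 2 := by
    simpa using ((continuous_const_mul ν).tendsto' 0 0 (mul_zero ν)).eventually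
      (Metric.closedBall_mem_nhds (0 : ℝ) (by norm_num : (0 : ℝ) < 1 / 2))
  have hlim : ∫ v in Ioi 0, exp (-v ^ 2) = √π / 2 := by
    simpa using integral_gaussian_Ioi 1
  rw [← hlim]
  refine tendsto_integral_filter_of_dominated_convergence (fun v => exp (-(1 / 2) * v ^ 2))
    (Eventually.of_forall fun c => (hcont c).aestronglyMeasurable) ?_
    (integrable_exp_neg_mul_sq (by norm_num)).integrableOn (ae_of_all _ fun v => ?_)
  · filter_upwards [hsmall] with c hc
    refine ae_of_all _ fun v => ?_
    rw [norm_of_nonneg (by unfold besselKRescaledIntegrand; positivity)]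
    exact besselKRescaledIntegrand_le hc v
  · have := ((continuous_besselKRescaledIntegrand ν).comp
      (Continuous.prodMk_left v)).tendsto 0
    simpa [besselKRescaledIntegrand, Function.comp_def] using this

/-- large-argument asymptotics of `K_ν`:
`K_ν(x) ~ √(π/(2x)) e^{−x}` as `x → +∞`, i.e. `√(2x/π) e^x K_ν(x) → 1`. -/
theorem besselK_large_argument (ν : ℝ) :
    Tendsto (fun x : ℝ => Real.sqrt (2 * x / Real.pi) * Real.exp x * besselK ν x)
      atTop (𝓝 1) := by
  have hscale : Tendsto (fun x : ℝ => (√(2 * x))⁻¹) atTop (𝓝 0) :=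
    tendsto_inv_atTop_zero.comp (tendsto_sqrt_atTop.comp (tendsto_id.const_mul_atTop two_pos))
  have hlim := ((tendsto_integral_besselKRescaledIntegrand ν).comp hscale).const_mul (2 / √π)
  rw [div_mul_div_cancel₀ (sqrt_ne_zero'.2 pi_pos), div_self two_ne_zero] at hlim
  refine hlim.congr' ?_
  filter_upwards [eventually_gt_atTop 0] with x hx
  exact (sqrt_mul_exp_mul_besselK_eq ν hx).symm
end

section
/- Let a ∈ ℂ and γ ∈ ℝ, and let g₀⁻, g₁⁻, g₀⁺, g₁⁺ be complex numbers satisfying the type-II_a boundary conditions g₀⁺ = a·g₀⁻ and g₁⁻ + conj(a)·g₁⁺ = γ·g₀⁻. Then −Im( conj(g₀⁻)·g₁⁻ ) = Im( conj(g₀⁺)·g₁⁺ ). (This expresses the conservation of the probability current across the Grushin singularity: the left and right limiting currents J^± = ±2(1+α)·Im(conj(g₀^±)·g₁^±) coincide.) -/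
/-- conservation of the probability current across the Grushin
singularity for the type-`II_a` boundary conditions: if `g₀⁺ = a g₀⁻` and
`g₁⁻ + conj(a) g₁⁺ = γ g₀⁻` with `γ ∈ ℝ`, then
`−Im(conj(g₀⁻) g₁⁻) = Im(conj(g₀⁺) g₁⁺)`. -/
theorem current_conservation_IIa (a : ℂ) (γ : ℝ) (g0m g1m g0p g1p : ℂ)
    (h0 : g0p = a * g0m) (h1 : g1m + (starRingEnd ℂ a) * g1p = (γ : ℂ) * g0m) :
    -((starRingEnd ℂ g0m * g1m).im) = ((starRingEnd ℂ g0p * g1p).im) := by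
  -- The total current `conj g₀⁻ · (g₁⁻ + conj a · g₁⁺) = γ |g₀⁻|²` is real.
  have total_real : starRingEnd ℂ g0m * g1m + starRingEnd ℂ g0p * g1p =
      ((γ * Complex.normSq g0m : ℝ) : ℂ) := by
    rw [h0, map_mul, Complex.ofReal_mul, Complex.normSq_eq_conj_mul_self]
    linear_combination starRingEnd ℂ g0m * h1
  have total_im := congrArg Complex.im total_real
  rw [Complex.add_im, Complex.ofReal_im] at total_im
  linarith
end

section
/- For every α ∈ (0,1), the infimum over b > 0 of the function b ↦ (1 + b²(1+α)²)·b^{−2α/(1+α)} equals (1+α)^{(1+3α)/(1+α)} · α^{−α/(1+α)}, and it is attained at b = √α/(1+α). -/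
/-!
Writing `θ = α / (1 + α)` and `t = b² (1 + α)²`, the function equals `(1 + α)^{2θ} (1 + t) t^{-θ}`.
Weighted AM–GM for `1 / (1 - θ)` and `t / θ` with weights `1 - θ` and `θ` shows that
`t ↦ (1 + t) t^{-θ}` is minimised on `t > 0` at `t = θ / (1 - θ) = α`, i.e. at `b = √α / (1 + α)`.
-/

open Real Set

lemma rpow_neg_mul_rpow_sub_one_le_one_add_mul_rpow_neg {θ t : ℝ} (hθ₀ : 0 < θ) (hθ₁ : θ < 1)
    (ht : 0 < t) : θ ^ (-θ) * (1 - θ) ^ (θ - 1) ≤ (1 + t) * t ^ (-θ) := by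
  have h1θ : 0 < 1 - θ := by linarith
  have amgm := geom_mean_le_arith_mean2_weighted h1θ.le hθ₀.le (one_div_pos.2 h1θ).le
    (div_pos ht hθ₀).le (sub_add_cancel 1 θ)
  have hgeom : (1 / (1 - θ)) ^ (1 - θ) * (t / θ) ^ θ
      = θ ^ (-θ) * (1 - θ) ^ (θ - 1) * t ^ θ := by
    rw [div_rpow ht.le hθ₀.le, one_div, inv_rpow h1θ.le, ← rpow_neg h1θ.le, rpow_neg hθ₀.le]
    ring_nf
  rw [hgeom, mul_one_div_cancel h1θ.ne', mul_div_cancel₀ _ hθ₀.ne'] at amgm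
  calc θ ^ (-θ) * (1 - θ) ^ (θ - 1)
      = θ ^ (-θ) * (1 - θ) ^ (θ - 1) * t ^ θ * t ^ (-θ) := by
        rw [mul_assoc _ (t ^ θ), ← rpow_add ht, add_neg_cancel, rpow_zero, mul_one]
    _ ≤ (1 + t) * t ^ (-θ) := by gcongr

lemma one_add_div_one_sub_mul_rpow_neg {θ : ℝ} (hθ₀ : 0 ≤ θ) (hθ₁ : θ < 1) :
    (1 + θ / (1 - θ)) * (θ / (1 - θ)) ^ (-θ) = θ ^ (-θ) * (1 - θ) ^ (θ - 1) := by
  have h1θ : 0 < 1 - θ := by linarith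
  have hsum : 1 + θ / (1 - θ) = (1 - θ) ^ (-1 : ℝ) := by
    rw [rpow_neg_one]
    field_simp
    ring
  rw [hsum, div_rpow hθ₀ h1θ.le, div_eq_mul_inv, ← rpow_neg h1θ.le, neg_neg, sub_eq_add_neg θ 1,
    rpow_add h1θ]
  ring

lemma isMinOn_one_add_mul_rpow_neg {θ : ℝ} (hθ₀ : 0 < θ) (hθ₁ : θ < 1) :
    IsMinOn (fun t : ℝ => (1 + t) * t ^ (-θ)) (Ioi 0) (θ / (1 - θ)) :=
  isMinOn_iff.2 fun _ ht => by
    simpa only [one_add_div_one_sub_mul_rpow_neg hθ₀.le hθ₁] using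
      rpow_neg_mul_rpow_sub_one_le_one_add_mul_rpow_neg hθ₀ hθ₁ ht

lemma one_add_sq_mul_sq_mul_rpow_neg {b c : ℝ} (hb : 0 < b) (hc : 0 < c) (s : ℝ) :
    (1 + b ^ 2 * c ^ 2) * b ^ (-(2 * s))
      = c ^ (2 * s) * ((1 + b ^ 2 * c ^ 2) * (b ^ 2 * c ^ 2) ^ (-s)) := by
  rw [mul_rpow (by positivity) (by positivity), ← rpow_natCast_mul hb.le,
    ← rpow_natCast_mul hc.le, Nat.cast_ofNat, mul_neg, mul_left_comm, mul_left_comm (c ^ _),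
    ← rpow_add hc, add_neg_cancel, rpow_zero, mul_one]

/-- for `α ∈ (0,1)`, the infimum over `b > 0` of
`b ↦ (1 + b²(1+α)²)·b^{−2α/(1+α)}` equals `(1+α)^{(1+3α)/(1+α)} α^{−α/(1+α)}`,
attained at `b = √α/(1+α)`. -/
theorem variational_minimisation (α : ℝ) (hα : α ∈ Set.Ioo (0 : ℝ) 1) :
    let f : ℝ → ℝ := fun b => (1 + b ^ 2 * (1 + α) ^ 2) * b ^ (-(2 * α / (1 + α)))
    let m : ℝ := (1 + α) ^ ((1 + 3 * α) / (1 + α)) * α ^ (-(α / (1 + α)))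
    IsLeast (f '' Set.Ioi 0) m ∧ f (Real.sqrt α / (1 + α)) = m := by
  intro f m
  obtain ⟨hα₀, -⟩ := hα
  have h1α : 0 < 1 + α := by linarith
  set θ := α / (1 + α)
  set g : ℝ → ℝ := fun t => (1 + t) * t ^ (-θ)
  have hθ₀ : 0 < θ := by positivity
  have hθ₁ : θ < 1 := (div_lt_one h1α).2 (by linarith)
  have hopt : θ / (1 - θ) = α := by simp only [θ]; field_simp; ring
  have hf : ∀ b > 0, f b = (1 + α) ^ (2 * θ) * g (b ^ 2 * (1 + α) ^ 2) := fun b hb => by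
    simp only [f, g, mul_div_assoc]
    exact one_add_sq_mul_sq_mul_rpow_neg hb h1α θ
  have hm : m = (1 + α) ^ (2 * θ) * g α := by
    have hexp : (1 + 3 * α) / (1 + α) = 2 * θ + 1 := by simp only [θ]; field_simp; ring
    simp only [m, g, hexp, rpow_add h1α, rpow_one]
    ring
  have hb₀ : 0 < √α / (1 + α) := by positivity
  have hfb₀ : f (√α / (1 + α)) = m := by
    rw [hf _ hb₀, hm, div_pow, sq_sqrt hα₀.le, div_mul_cancel₀ _ (by positivity)]
  refine ⟨⟨⟨_, hb₀, hfb₀⟩, ?_⟩, hfb₀⟩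
  rintro _ ⟨b, hb, rfl⟩
  have hmin : IsMinOn g (Ioi 0) α := hopt ▸ isMinOn_one_add_mul_rpow_neg hθ₀ hθ₁
  rw [hm, hf b hb]
  gcongr
  exact hmin (mul_pos (pow_pos hb 2) (pow_pos h1α 2))
end

section
/- Let α ∈ [0,1) and k ∈ ℝ. For every continuously differentiable function g : ℝ → ℂ with compact support contained in (0,∞), one has the quadratic-form lower bound ∫₀^∞ ( |g'(x)|² + ( k²·x^{2α} + α(2+α)/(4x²) )·|g(x)|² ) dx ≥ (1+α)·((2+α)/4)^{α/(1+α)}·|k|^{2/(1+α)} · ∫₀^∞ |g(x)|² dx. (This is the lower semi-bound of the minimal fibre operator A_α(k) = −d²/dx² + k²|x|^{2α} + α(2+α)/(4x²).) -/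
/-!
The kinetic term `‖g'‖²` is nonnegative, so it suffices that the potential
`k² x^{2α} + α(2+α)/(4x²)` is at least the constant for every `x > 0`. With `y = x²` this is
the weighted AM–GM inequality with weights `1/(1+α)` and `α/(1+α)`; the constant is precisely
the minimum of the potential over `x > 0`.
-/

open MeasureTheory Real Set

theorem one_add_mul_rpow_mul_rpow_le {a b α y : ℝ} (ha : 0 ≤ a) (hb : 0 ≤ b) (hα : 0 ≤ α)
    (hy : 0 < y) :
    (1 + α) * (a ^ (1 / (1 + α)) * b ^ (α / (1 + α))) ≤ a * y ^ α + α * b / y := by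
  have h1α : 0 < 1 + α := by linarith
  have hw : 1 / (1 + α) + α / (1 + α) = 1 := by field_simp
  have amgm := geom_mean_le_arith_mean2_weighted (by positivity) (by positivity)
    (by positivity : 0 ≤ (1 + α) * y ^ α * a) (by positivity : 0 ≤ (1 + α) * y⁻¹ * b) hw
  -- the factors are chosen so that the powers of `y` cancel in the geometric mean
  have hweights :
      ((1 + α) * y ^ α) ^ (1 / (1 + α)) * ((1 + α) * y⁻¹) ^ (α / (1 + α)) = 1 + α := by
    rw [mul_rpow h1α.le (by positivity), mul_rpow h1α.le (by positivity), ← rpow_mul hy.le,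
      inv_rpow hy.le, mul_mul_mul_comm, ← rpow_add h1α, hw, rpow_one, mul_one_div,
      mul_inv_cancel₀ (rpow_pos_of_pos hy _).ne', mul_one]
  calc (1 + α) * (a ^ (1 / (1 + α)) * b ^ (α / (1 + α)))
      = ((1 + α) * y ^ α * a) ^ (1 / (1 + α)) * ((1 + α) * y⁻¹ * b) ^ (α / (1 + α)) := by
        rw [mul_rpow (by positivity) ha, mul_rpow (by positivity) hb, mul_mul_mul_comm,
          hweights]
    _ ≤ 1 / (1 + α) * ((1 + α) * y ^ α * a) + α / (1 + α) * ((1 + α) * y⁻¹ * b) := amgm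
    _ = a * y ^ α + α * b / y := by field_simp

theorem const_le_fibre_potential {α k x : ℝ} (hα : 0 ≤ α) (hx : 0 < x) :
    (1 + α) * ((2 + α) / 4) ^ (α / (1 + α)) * |k| ^ (2 / (1 + α))
      ≤ k ^ 2 * x ^ (2 * α) + α * (2 + α) / (4 * x ^ 2) := by
  have key := one_add_mul_rpow_mul_rpow_le (sq_nonneg k) (by positivity : 0 ≤ (2 + α) / 4) hα
    (by positivity : 0 < x ^ 2)
  have hk : (k ^ 2) ^ (1 / (1 + α)) = |k| ^ (2 / (1 + α)) := by
    rw [← sq_abs, ← rpow_natCast, ← rpow_mul (abs_nonneg k), mul_one_div]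
    norm_num
  have hx' : (x ^ 2) ^ α = x ^ (2 * α) := by
    rw [← rpow_natCast, ← rpow_mul hx.le]
    norm_num
  rw [hk, hx'] at key
  calc _ = (1 + α) * (|k| ^ (2 / (1 + α)) * ((2 + α) / 4) ^ (α / (1 + α))) := by ring
    _ ≤ _ := key
    _ = _ := by ring

theorem ContinuousOn.integrable_of_support_subset {X E : Type*} [TopologicalSpace X]
    [T2Space X] [MeasurableSpace X] [OpensMeasurableSpace X] [NormedAddCommGroup E]
    {μ : Measure X} [IsFiniteMeasureOnCompacts μ] {f : X → E} {K : Set X}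
    (hf : ContinuousOn f K) (hK : IsCompact K) (hfK : Function.support f ⊆ K) :
    Integrable f μ :=
  (integrableOn_iff_integrable_of_support_subset hfK).mp (hf.integrableOn_compact hK)

/-- lower semi-bound for the quadratic form of the minimal fibre
operator `A_α(k) = −d²/dx² + k² x^{2α} + α(2+α)/(4x²)` on smooth functions
compactly supported in `(0,∞)`. -/
theorem fibre_operator_lower_bound (α k : ℝ) (hα : α ∈ Set.Ico (0 : ℝ) 1)
    (g : ℝ → ℂ) (hg : ContDiff ℝ 1 g) (hsupp : HasCompactSupport g)
    (hsupp' : tsupport g ⊆ Set.Ioi 0) :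
    (∫ x in Set.Ioi (0 : ℝ),
        (‖deriv g x‖ ^ 2
          + (k ^ 2 * x ^ (2 * α) + α * (2 + α) / (4 * x ^ 2)) * ‖g x‖ ^ 2))
      ≥ (1 + α) * ((2 + α) / 4) ^ (α / (1 + α)) * |k| ^ (2 / (1 + α))
        * ∫ x in Set.Ioi (0 : ℝ), ‖g x‖ ^ 2 := by
  set V : ℝ → ℝ := fun x => k ^ 2 * x ^ (2 * α) + α * (2 + α) / (4 * x ^ 2)
  have hV : ContinuousOn V (Ioi 0) := by
    refine ContinuousOn.add (continuousOn_const.mul fun x hx => ?_)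
      (continuousOn_const.div (by fun_prop) fun x (hx : 0 < x) => by positivity)
    exact (continuousAt_rpow_const x _ (Or.inl (ne_of_gt hx))).continuousWithinAt
  have hsupp_form :
      Function.support (fun x => ‖deriv g x‖ ^ 2 + V x * ‖g x‖ ^ 2) ⊆ tsupport g := by
    intro x hx
    by_contra hxg
    have hg0 : g x = 0 := image_eq_zero_of_notMem_tsupport hxg
    have hg'0 : deriv g x = 0 := Function.notMem_support.mp fun h => hxg (support_deriv_subset h)
    simp [hg0, hg'0] at hx
  have hint_form : Integrable (fun x => ‖deriv g x‖ ^ 2 + V x * ‖g x‖ ^ 2) :=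
    (((hg.continuous_deriv le_rfl).norm.pow 2).continuousOn.add
      ((hV.mono hsupp').mul (hg.continuous.norm.pow 2).continuousOn)).integrable_of_support_subset
      hsupp hsupp_form
  have hint_sq : Integrable (fun x => ‖g x‖ ^ 2) :=
    (hg.continuous.norm.pow 2).continuousOn.integrable_of_support_subset hsupp
      fun x hx => subset_tsupport g (by simpa using hx)
  rw [ge_iff_le, ← integral_const_mul]
  refine setIntegral_mono_on (hint_sq.const_mul _).integrableOn hint_form.integrableOn
    measurableSet_Ioi fun x (hx : 0 < x) => ?_
  exact (mul_le_mul_of_nonneg_right (const_le_fibre_potential hα.1 hx) (sq_nonneg _)).trans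
    (le_add_of_nonneg_left (sq_nonneg _))
end

section
/- Let ι be a type, let (H i)_{i∈ι} be complex Hilbert spaces, and for each i let S i : H i → H i be a bounded self-adjoint operator, with a uniform bound: there exists C ≥ 0 such that ‖S i‖ ≤ C for all i. Let T be a bounded linear operator on the ℓ²-direct sum ⊕_{i∈ι} H i (the space lp H 2) acting fibrewise, i.e. (T ψ) i = S i (ψ i) for every ψ and every i. Then the spectrum of T equals the closure of the union of the spectra of the fibre operators: σ(T) = closure( ⋃_{i∈ι} σ(S i) ). -/
/-!
If every fibre `A i` of a fibred operator `T` on `lp E p` is invertible with uniformly bounded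
inverses, `T` is invertible, its inverse acting fibrewise. Conversely, reading the fibre over `i`
of `T⁻¹` off `lp.single p i` inverts `A i`; hence `σ(S i) ⊆ σ(T)`, and the closure follows since
`σ(T)` is closed. If `z` is at distance `δ > 0` from every `σ(S i)`, the continuous functional
calculus for the normal operators `S i` gives `‖(z - S i)⁻¹‖ ≤ δ⁻¹`, so `z - T` is invertible.
-/

open scoped ENNReal

section Fibred

variable {𝕜 : Type*} [NontriviallyNormedField 𝕜] {ι : Type*} {E : ι → Type*}
  [∀ i, NormedAddCommGroup (E i)] [∀ i, NormedSpace 𝕜 (E i)] {p : ℝ≥0∞} [Fact (1 ≤ p)]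
  {T : lp E p →L[𝕜] lp E p} {A : ∀ i, E i →L[𝕜] E i}

theorem lp.fibred_algebraMap_sub (hT : ∀ ψ i, T ψ i = A i (ψ i)) (z : 𝕜) (ψ : lp E p) (i : ι) :
    (algebraMap 𝕜 _ z - T) ψ i = (algebraMap 𝕜 _ z - A i) (ψ i) := by
  simp only [Algebra.algebraMap_eq_smul_one, sub_apply, smul_apply, one_apply_eq_self,
    lp.coeFn_sub, lp.coeFn_smul, Pi.sub_apply, Pi.smul_apply, hT]

theorem lp.fibred_single [DecidableEq ι] (hT : ∀ ψ i, T ψ i = A i (ψ i)) (i : ι) (x : E i) :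
    T (lp.single p i x) = lp.single p i (A i x) := by
  ext j
  rw [hT, lp.single_apply, lp.single_apply]
  exact Pi.apply_single (fun j => A j) (fun j => map_zero _) i x j

variable [∀ i, CompleteSpace (E i)]

theorem lp.isUnit_fibre_of_isUnit (hT : ∀ ψ i, T ψ i = A i (ψ i)) (hu : IsUnit T) (i : ι) :
    IsUnit (A i) := by
  classical
  obtain ⟨u, rfl⟩ := hu
  let B : E i → E i := fun x => (↑u⁻¹ : lp E p →L[𝕜] lp E p) (lp.single p i x) i
  have hleft : Function.LeftInverse B (A i) := fun x => by
    simp only [B, ← lp.fibred_single hT, ← mul_apply_eq_comp, u.inv_mul, one_apply_eq_self,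
      lp.single_apply_self]
  have hright : Function.RightInverse B (A i) := fun x => by
    rw [← hT, ← mul_apply_eq_comp, u.mul_inv, one_apply_eq_self, lp.single_apply_self]
  exact ContinuousLinearMap.isUnit_iff_bijective.mpr ⟨hleft.injective, hright.surjective⟩

theorem lp.isUnit_of_isUnit_fibre (hT : ∀ ψ i, T ψ i = A i (ψ i)) (hA : ∀ i, IsUnit (A i))
    (M : ℝ) (hM : ∀ i, ‖Ring.inverse (A i)‖ ≤ M) : IsUnit T := by
  have hinv_mul (i : ι) (x : E i) : Ring.inverse (A i) (A i x) = x := by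
    rw [← mul_apply_eq_comp, Ring.inverse_mul_cancel _ (hA i), one_apply_eq_self]
  have hmul_inv (i : ι) (x : E i) : A i (Ring.inverse (A i) x) = x := by
    rw [← mul_apply_eq_comp, Ring.mul_inverse_cancel _ (hA i), one_apply_eq_self]
  let B : lp E p → lp E p := fun φ => ⟨fun i => Ring.inverse (A i) (φ i),
    ((lp.memℓp φ).norm.const_smul M).mono fun i => ((Ring.inverse (A i)).le_opNorm _).trans
      (mul_le_mul_of_nonneg_right (hM i) (norm_nonneg _))⟩
  have hleft : Function.LeftInverse B T := fun ψ => lp.ext <| funext fun i => by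
    change Ring.inverse (A i) (T ψ i) = ψ i
    rw [hT, hinv_mul]
  have hright : Function.RightInverse B T := fun φ => lp.ext <| funext fun i => by
    rw [hT]
    exact hmul_inv i (φ i)
  exact ContinuousLinearMap.isUnit_iff_bijective.mpr ⟨hleft.injective, hright.surjective⟩

theorem lp.spectrum_fibre_subset (hT : ∀ ψ i, T ψ i = A i (ψ i)) (i : ι) :
    spectrum 𝕜 (A i) ⊆ spectrum 𝕜 T := fun z hz hzT =>
  hz <| lp.isUnit_fibre_of_isUnit (lp.fibred_algebraMap_sub hT z) hzT i

theorem lp.notMem_spectrum_of_forall_norm_resolvent_le (hT : ∀ ψ i, T ψ i = A i (ψ i)) {z : 𝕜}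
    (hz : ∀ i, z ∉ spectrum 𝕜 (A i)) (M : ℝ) (hM : ∀ i, ‖resolvent (A i) z‖ ≤ M) :
    z ∉ spectrum 𝕜 T :=
  spectrum.notMem_iff.mpr <| lp.isUnit_of_isUnit_fibre (lp.fibred_algebraMap_sub hT z)
    (fun i => spectrum.notMem_iff.mp (hz i)) M hM

end Fibred

theorem IsStarNormal.norm_resolvent_le {A : Type*} [CStarAlgebra A] {a : A} [IsStarNormal a]
    {z : ℂ} {δ : ℝ} (hδ : 0 < δ) (hsep : ∀ w ∈ spectrum ℂ a, δ ≤ dist z w) :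
    ‖resolvent a z‖ ≤ δ⁻¹ := by
  have hne : ∀ w ∈ spectrum ℂ a, z - w ≠ 0 := fun w hw h => by
    have := hsep w hw
    rw [dist_eq_norm, h, norm_zero] at this
    exact hδ.not_ge this
  have hcfc : cfc (fun w => z - w) a = algebraMap ℂ A z - a := by
    rw [cfc_sub (fun _ => z) (fun w => w), cfc_const z a, cfc_id' ℂ a]
  rw [resolvent, ← hcfc, ← cfc_inv (fun w => z - w) a hne]
  refine norm_cfc_le (inv_nonneg.mpr hδ.le) fun w hw => ?_
  rw [norm_inv, ← dist_eq_norm]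
  exact inv_anti₀ hδ (hsep w hw)

theorem spectrum_of_fibred_operator_general {ι : Type*} (H : ι → Type*)
    [∀ i, NormedAddCommGroup (H i)] [∀ i, InnerProductSpace ℂ (H i)]
    [∀ i, CompleteSpace (H i)]
    (S : ∀ i, H i →L[ℂ] H i) (hsa : ∀ i, IsSelfAdjoint (S i))
    (T : lp H 2 →L[ℂ] lp H 2)
    (hT : ∀ (ψ : lp H 2) (i : ι), (T ψ : ∀ i, H i) i = S i ((ψ : ∀ i, H i) i)) :
    spectrum ℂ T = closure (⋃ i, spectrum ℂ (S i)) := by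
  refine subset_antisymm (fun z hz => ?_) (closure_minimal
    (Set.iUnion_subset (lp.spectrum_fibre_subset hT)) (spectrum.isClosed (𝕜 := ℂ) T))
  by_contra hzc
  obtain ⟨δ, hδ, hsep⟩ : ∃ δ > 0, ∀ w ∈ ⋃ i, spectrum ℂ (S i), δ ≤ dist z w := by
    simpa [Metric.mem_closure_iff] using hzc
  have hsep_i (i : ι) (w : ℂ) (hw : w ∈ spectrum ℂ (S i)) : δ ≤ dist z w :=
    hsep w (Set.mem_iUnion_of_mem i hw)
  have hz_i (i : ι) : z ∉ spectrum ℂ (S i) := fun hzi =>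
    hδ.not_ge (by simpa using hsep_i i z hzi)
  have hnormal (i : ι) : IsStarNormal (S i) := (hsa i).isStarNormal
  exact lp.notMem_spectrum_of_forall_norm_resolvent_le hT hz_i δ⁻¹
    (fun i => IsStarNormal.norm_resolvent_le hδ (hsep_i i)) hz

/-- the spectrum of a fibred bounded self-adjoint operator on an
`ℓ²`-direct sum of Hilbert spaces is the closure of the union of the spectra of
the fibre operators. -/
theorem spectrum_of_fibred_operator {ι : Type*} (H : ι → Type*)
    [∀ i, NormedAddCommGroup (H i)] [∀ i, InnerProductSpace ℂ (H i)]
    [∀ i, CompleteSpace (H i)]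
    (S : ∀ i, H i →L[ℂ] H i) (hsa : ∀ i, IsSelfAdjoint (S i))
    (C : ℝ) (hC : 0 ≤ C) (hbd : ∀ i, ‖S i‖ ≤ C)
    (T : lp H 2 →L[ℂ] lp H 2)
    (hT : ∀ (ψ : lp H 2) (i : ι), (T ψ : ∀ i, H i) i = S i ((ψ : ∀ i, H i) i)) :
    spectrum ℂ T = closure (⋃ i, spectrum ℂ (S i)) :=
  spectrum_of_fibred_operator_general H S hsa T hT
end

section
/- Let α ∈ [0,1) and λ ≥ 0. If g : ℝ → ℂ is twice differentiable on (0,∞), satisfies −g''(x) + (α(2+α)/(4x²))·g(x) = λ·g(x) for every x > 0, and is square-integrable on (0,∞) (∫₀^∞ |g(x)|² dx < ∞), then g vanishes identically on (0,∞). (Hence the essential spectrum [0,+∞) of the zero-mode fibre operators contains no embedded eigenvalues.) -/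
/-!
Write `c = p (p - 1)` with `p = 1 + α / 2`; testing against continuous linear functionals, it
suffices to treat a real solution `u` of `u'' = (c / x² - λ) u`. Its energy
`E = u'² + (λ - c / x²) u²` is nondecreasing, since `E' = 2 c u² / x³`. If `E > 0` somewhere,
then `(u u')' ≥ E - 2 λ u²` makes `u u' → ∞`, hence `u² → ∞`, which is not integrable.
So `E ≤ 0`. For `λ > 0` this forces `u = u' = 0` at large `x`, and backward uniqueness for
the linear ODE (Grönwall) gives `u = 0`. For `λ = 0` the Wronskian `w` of `u` with the
solution `x ^ p` is constant and `(p u - x u')² = w² x ^ (2 - 2p)`. With `E ≤ 0` this bounds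
`x ^ (2 - 2p)`, which is not integrable on `(0, ∞)`, by a multiple of `u²` unless `w = 0`;
and `w = 0` forces `u = 0`.
-/

open MeasureTheory Set Filter

theorem tendsto_atTop_of_hasDerivAt_ge {F f h : ℝ → ℝ} {a δ : ℝ} (hδ : 0 < δ)
    (hF : ∀ x ≥ a, HasDerivAt F (f x) x) (hh : IntegrableOn h (Ioi a))
    (hh₀ : ∀ x > a, 0 ≤ h x) (hf : ∀ x > a, δ - h x ≤ f x) :
    Tendsto F atTop atTop := by
  have key : ∀ T ≥ a, δ * T + (F a - δ * a - ∫ x in Ioi a, h x) ≤ F T := by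
    intro T hT
    have hint : IntegrableOn h (Icc a T) :=
      (integrableOn_Icc_iff_integrableOn_Ioc).mpr (hh.mono_set Ioc_subset_Ioi_self)
    have hftc := intervalIntegral.integral_le_sub_of_hasDeriv_right_of_le
      (φ := fun x => δ - h x) hT
      (fun x hx => (hF x hx.1).continuousAt.continuousWithinAt)
      (fun x hx => (hF x hx.1.le).hasDerivWithinAt)
      ((integrableOn_const (by simp)).sub hint) (fun x hx => hf x hx.1)
    have hsplit : ∫ x in a..T, (δ - h x) = δ * (T - a) - ∫ x in a..T, h x := by
      rw [intervalIntegral.integral_sub intervalIntegrable_const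
        (intervalIntegrable_iff_integrableOn_Icc_of_le hT |>.2 hint),
        intervalIntegral.integral_const, smul_eq_mul, mul_comm]
    have htail : ∫ x in a..T, h x ≤ ∫ x in Ioi a, h x := by
      rw [intervalIntegral.integral_of_le hT]
      exact setIntegral_mono_set hh ((ae_restrict_mem measurableSet_Ioi).mono hh₀)
        Ioc_subset_Ioi_self.eventuallyLE
    linarith
  exact tendsto_atTop_mono' _ ((eventually_ge_atTop a).mono key)
    (tendsto_atTop_add_const_right _ _ (tendsto_id.const_mul_atTop hδ))

theorem not_integrableOn_Ioi_of_tendsto_atTop {f : ℝ → ℝ} (hf : Tendsto f atTop atTop)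
    (a : ℝ) : ¬ IntegrableOn f (Ioi a) := by
  refine not_integrableOn_of_tendsto_norm_atTop_of_deriv_isBigO_filter atTop (Ioi_mem_atTop a)
    (Eventually.of_forall fun x => differentiableAt_id) tendsto_norm_atTop_atTop ?_
  refine Asymptotics.IsBigO.of_bound 1 ((hf.eventually_ge_atTop 1).mono fun x hx => ?_)
  simp [abs_of_pos (one_pos.trans_le hx), hx]

theorem eq_zero_of_hasDerivAt_of_eq_zero_at_right {u v Q : ℝ → ℝ} {a b K : ℝ}
    (hu : ∀ x ∈ Icc a b, HasDerivAt u (v x) x)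
    (hv : ∀ x ∈ Icc a b, HasDerivAt v (Q x * u x) x)
    (hQ : ∀ x ∈ Icc a b, |Q x| ≤ K) (hub : u b = 0) (hvb : v b = 0) :
    ∀ x ∈ Icc a b, u x = 0 := by
  have hmem : ∀ t ∈ Icc 0 (b - a), b - t ∈ Icc a b :=
    fun t ht => ⟨by linarith [ht.2], by linarith [ht.1]⟩
  have hderiv : ∀ t ∈ Icc 0 (b - a), HasDerivAt (fun t => (u (b - t), v (b - t)))
      (-v (b - t), -(Q (b - t) * u (b - t))) t := by
    intro t ht
    have hs : HasDerivAt (fun t : ℝ => b - t) (-1) t := by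
      simpa using (hasDerivAt_id t).const_sub b
    simpa using ((hu _ (hmem t ht)).comp t hs).prodMk ((hv _ (hmem t ht)).comp t hs)
  have hzero := eq_zero_of_abs_deriv_le_mul_abs_self_of_eq_zero_right (K := max 1 K)
    (fun t ht => (hderiv t ht).continuousAt.continuousWithinAt)
    (fun t ht => (hderiv t (Ico_subset_Icc_self ht)).hasDerivWithinAt) (by simp [hub, hvb])
    (fun t ht => by
      have h1 := hQ _ (hmem t (Ico_subset_Icc_self ht))
      simp only [Prod.norm_mk, norm_neg, Real.norm_eq_abs, abs_mul]
      refine max_le ?_ ?_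
      · nlinarith [le_max_left 1 K, le_max_right |u (b - t)| |v (b - t)|, abs_nonneg (v (b - t))]
      · nlinarith [le_max_right 1 K, le_max_left |u (b - t)| |v (b - t)|, abs_nonneg (u (b - t)),
          abs_nonneg (Q (b - t)), le_max_left 1 K])
  intro x hx
  simpa using congrArg Prod.fst (hzero (b - x) ⟨by linarith [hx.2], by linarith [hx.1]⟩)

noncomputable def energy (c lam : ℝ) (u v : ℝ → ℝ) (x : ℝ) : ℝ :=
  v x ^ 2 + (lam - c / x ^ 2) * u x ^ 2

section Energy

variable {c lam : ℝ} {u v : ℝ → ℝ}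
  (hu : ∀ x > 0, HasDerivAt u (v x) x) (hv : ∀ x > 0, HasDerivAt v ((c / x ^ 2 - lam) * u x) x)
include hu hv

theorem hasDerivAt_energy {x : ℝ} (hx : 0 < x) :
    HasDerivAt (energy c lam u v) (2 * c * u x ^ 2 / x ^ 3) x := by
  have hx0 := hx.ne'
  have hq : HasDerivAt (fun y : ℝ => lam - c / y ^ 2) (2 * c / x ^ 3) x :=
    ((hasDerivAt_const x lam).sub ((hasDerivAt_const x c).div (hasDerivAt_pow 2 x)
      (pow_ne_zero 2 hx0))).congr_deriv (by field_simp; ring)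
  exact (((hv x hx).pow 2).add (hq.mul ((hu x hx).pow 2))).congr_deriv
    (by simp only [Pi.pow_apply]; field_simp; ring)

theorem monotoneOn_energy (hc : 0 ≤ c) : MonotoneOn (energy c lam u v) (Ioi 0) := by
  refine monotoneOn_of_hasDerivWithinAt_nonneg (f' := fun x => 2 * c * u x ^ 2 / x ^ 3)
    (convex_Ioi 0) (fun x hx => (hasDerivAt_energy hu hv hx).continuousAt.continuousWithinAt) ?_ ?_
  · rw [interior_Ioi]
    exact fun x hx => (hasDerivAt_energy hu hv hx).hasDerivWithinAt
  · rw [interior_Ioi]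
    intro x hx
    have : 0 < x := hx
    positivity

theorem tendsto_mul_atTop_of_energy_pos (hc : 0 ≤ c) (hlam : 0 ≤ lam)
    (hL2 : IntegrableOn (fun x => u x ^ 2) (Ioi 0)) {x₀ : ℝ} (hx₀ : 0 < x₀)
    (hE : 0 < energy c lam u v x₀) : Tendsto (fun x => u x * v x) atTop atTop := by
  refine tendsto_atTop_of_hasDerivAt_ge hE
    (fun x hx => (hu x (hx₀.trans_le hx)).mul (hv x (hx₀.trans_le hx)))
    ((hL2.mono_set (Ioi_subset_Ioi hx₀.le)).const_mul (2 * lam)) (fun x _ => by positivity) ?_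
  intro x hx
  have hmono := monotoneOn_energy hu hv hc hx₀ (hx₀.trans hx) hx.le
  have : 0 ≤ c / x ^ 2 * u x ^ 2 := by positivity
  unfold energy at hmono ⊢
  nlinarith

theorem energy_nonpos (hc : 0 ≤ c) (hlam : 0 ≤ lam)
    (hL2 : IntegrableOn (fun x => u x ^ 2) (Ioi 0)) {x : ℝ} (hx : 0 < x) :
    energy c lam u v x ≤ 0 := by
  by_contra! hE
  obtain ⟨a, ha⟩ := eventually_atTop.1
    ((tendsto_mul_atTop_of_energy_pos hu hv hc hlam hL2 hx hE).eventually_ge_atTop 1)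
  have hsq : Tendsto (fun x => u x ^ 2) atTop atTop := by
    refine tendsto_atTop_of_hasDerivAt_ge (a := max a 1) (h := 0) two_pos
      (fun y hy => (hu y (one_pos.trans_le (le_of_max_le_right hy))).pow 2)
      integrableOn_zero (fun _ _ => le_rfl) fun y hy => ?_
    have := ha y (le_of_max_le_left hy.le)
    simp only [Pi.zero_apply, sub_zero, Nat.cast_ofNat, Nat.add_one_sub_one, pow_one]
    linarith
  exact not_integrableOn_Ioi_of_tendsto_atTop hsq 0 hL2

theorem eq_zero_of_energy_nonpos_of_lam_pos (hc : 0 ≤ c) (hlam : 0 < lam)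
    (hE : ∀ x > 0, energy c lam u v x ≤ 0) {x : ℝ} (hx : 0 < x) : u x = 0 := by
  set y := x + c / lam + 1
  have hcl : 0 ≤ c / lam := div_nonneg hc hlam.le
  have hxy : x ≤ y := by linarith
  have hy : 0 < y := by linarith
  have hpos : 0 < lam - c / y ^ 2 := by
    have : c / lam < y ^ 2 := by nlinarith
    rw [sub_pos, div_lt_iff₀ (by positivity)]
    rwa [div_lt_iff₀ hlam, mul_comm] at this
  have hEy := hE y hy
  unfold energy at hEy
  have huy : u y = 0 :=
    pow_eq_zero_iff two_ne_zero |>.1 (le_antisymm (by nlinarith [sq_nonneg (v y)]) (sq_nonneg _))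
  have hvy : v y = 0 := pow_eq_zero_iff two_ne_zero |>.1 (by
    rw [huy] at hEy
    nlinarith [sq_nonneg (v y)])
  refine eq_zero_of_hasDerivAt_of_eq_zero_at_right (Q := fun t => c / t ^ 2 - lam)
    (K := c / x ^ 2 + lam) (fun t ht => hu t (hx.trans_le ht.1))
    (fun t ht => hv t (hx.trans_le ht.1))
    (fun t ht => ?_) huy hvy x ⟨le_rfl, hxy⟩
  have h1 : 0 ≤ c / t ^ 2 := by positivity
  have h2 : c / t ^ 2 ≤ c / x ^ 2 :=
    div_le_div_of_nonneg_left hc (by positivity) (pow_le_pow_left₀ hx.le ht.1 2)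
  exact abs_le.2 ⟨by linarith, by linarith⟩

end Energy

theorem eq_zero_of_energy_nonpos_of_lam_eq_zero {p : ℝ} {u v : ℝ → ℝ} (hp : 1 ≤ p)
    (hu : ∀ x > 0, HasDerivAt u (v x) x)
    (hv : ∀ x > 0, HasDerivAt v (p * (p - 1) / x ^ 2 * u x) x)
    (hE : ∀ x > 0, energy (p * (p - 1)) 0 u v x ≤ 0)
    (hL2 : IntegrableOn (fun x => u x ^ 2) (Ioi 0)) {x : ℝ} (hx : 0 < x) : u x = 0 := by
  -- minus the Wronskian of the solution `x ^ p` with `u`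
  have hW : ∀ x > 0, HasDerivAt (fun y => y ^ p * (p * u y / y - v y)) 0 x := by
    intro x hx
    refine ((Real.hasDerivAt_rpow_const (p := p) (Or.inl hx.ne')).mul
      ((((hu x hx).const_mul p).div (hasDerivAt_id x) hx.ne').sub (hv x hx))).congr_deriv ?_
    simp only [Pi.div_apply, Pi.sub_apply, id]
    rw [Real.rpow_sub_one hx.ne']
    field_simp
    ring
  obtain ⟨w, hw⟩ := isOpen_Ioi.exists_is_const_of_deriv_eq_zero isPreconnected_Ioi
    (fun x hx => (hW x hx).differentiableAt.differentiableWithinAt) (fun x hx => (hW x hx).deriv)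
  have hE' : ∀ x > 0, (x * v x) ^ 2 ≤ p * (p - 1) * u x ^ 2 := by
    intro x hx
    have h := mul_le_mul_of_nonneg_right (hE x hx) (sq_nonneg x)
    have : p * (p - 1) / x ^ 2 * u x ^ 2 * x ^ 2 = p * (p - 1) * u x ^ 2 := by field_simp
    unfold energy at h
    nlinarith
  have hw' : ∀ x > 0, w ^ 2 * x ^ (2 - 2 * p) = (p * u x - x * v x) ^ 2 := by
    intro x hx
    have hxp : 0 < x ^ p := Real.rpow_pos_of_pos hx p
    rw [← hw x hx, Real.rpow_sub hx, Real.rpow_two,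
      show (2 : ℝ) * p = p * (2 : ℕ) by push_cast; ring, Real.rpow_mul_natCast hx.le]
    field_simp
  by_cases hw0 : w = 0
  · have h0 : (p * u x - x * v x) ^ 2 = 0 := by rw [← hw' x hx, hw0]; ring
    have hpu : p * u x = x * v x := sub_eq_zero.1 (pow_eq_zero_iff two_ne_zero |>.1 h0)
    have h := hE' x hx
    rw [← hpu] at h
    exact pow_eq_zero_iff two_ne_zero |>.1
      (le_antisymm (by nlinarith [sq_nonneg (u x)]) (sq_nonneg _))
  · refine absurd ?_ (not_integrableOn_Ioi_rpow (2 - 2 * p))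
    refine ((hL2.const_mul (4 * p ^ 2 / w ^ 2)).mono' ?_ ?_)
    · exact (continuousOn_id.rpow_const fun x hx => Or.inl (ne_of_gt hx)).aestronglyMeasurable
        measurableSet_Ioi
    · filter_upwards [ae_restrict_mem measurableSet_Ioi] with y hy
      rw [Real.norm_eq_abs, abs_of_pos (Real.rpow_pos_of_pos hy _), div_mul_eq_mul_div,
        le_div_iff₀ (by positivity), mul_comm, hw' y hy]
      nlinarith [hE' y hy, sq_nonneg (p * u y + y * v y)]

theorem eq_zero_of_integrableOn_sq {p lam : ℝ} {u v : ℝ → ℝ} (hp : 1 ≤ p)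
    (hlam : 0 ≤ lam)
    (hu : ∀ x > 0, HasDerivAt u (v x) x)
    (hv : ∀ x > 0, HasDerivAt v ((p * (p - 1) / x ^ 2 - lam) * u x) x)
    (hL2 : IntegrableOn (fun x => u x ^ 2) (Ioi 0)) {x : ℝ} (hx : 0 < x) : u x = 0 := by
  have hc : 0 ≤ p * (p - 1) := by nlinarith
  have hE : ∀ x > 0, energy (p * (p - 1)) lam u v x ≤ 0 :=
    fun x hx => energy_nonpos hu hv hc hlam hL2 hx
  rcases hlam.eq_or_lt with rfl | hlam
  · exact eq_zero_of_energy_nonpos_of_lam_eq_zero hp hu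
      (fun x hx => by simpa only [sub_zero] using hv x hx) hE hL2 hx
  · exact eq_zero_of_energy_nonpos_of_lam_pos hu hv hc hlam hE hx

theorem eq_zero_of_integrableOn_norm_sq {E : Type*} [NormedAddCommGroup E] [NormedSpace ℝ E]
    {p lam : ℝ} {g : ℝ → E} (hp : 1 ≤ p) (hlam : 0 ≤ lam)
    (hdiff : ∀ x > 0, DifferentiableAt ℝ g x ∧ DifferentiableAt ℝ (deriv g) x)
    (hode : ∀ x > 0, deriv (deriv g) x = (p * (p - 1) / x ^ 2 - lam) • g x)
    (hL2 : IntegrableOn (fun x => ‖g x‖ ^ 2) (Ioi 0)) {x : ℝ} (hx : 0 < x) : g x = 0 := by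
  refine SeparatingDual.eq_zero_of_forall_dual_eq_zero (R := ℝ) fun l => ?_
  have hu : ∀ y > 0, HasDerivAt (fun y => l (g y)) (l (deriv g y)) y :=
    fun y hy => l.hasFDerivAt.comp_hasDerivAt y (hdiff y hy).1.hasDerivAt
  refine eq_zero_of_integrableOn_sq hp hlam hu (fun y hy => ?_) ?_ hx
  · have h := l.hasFDerivAt.comp_hasDerivAt y (hdiff y hy).2.hasDerivAt
    rwa [hode y hy, map_smul, smul_eq_mul] at h
  · refine (hL2.const_mul (‖l‖ ^ 2)).mono' ?_ (Eventually.of_forall fun y => ?_)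
    · exact (ContinuousOn.pow (fun y hy => (hu y hy).continuousAt.continuousWithinAt) 2)
        |>.aestronglyMeasurable measurableSet_Ioi
    · rw [norm_pow, ← mul_pow]
      exact pow_le_pow_left₀ (norm_nonneg _) (l.le_opNorm _) 2

/-- no embedded eigenvalues. If `g` is twice differentiable on
`(0,∞)`, solves `−g'' + (α(2+α)/(4x²)) g = λ g` there with `λ ≥ 0`, and is
square-integrable on `(0,∞)`, then `g` vanishes identically on `(0,∞)`. -/
theorem no_embedded_eigenvalues (α lam : ℝ) (hα : α ∈ Set.Ico (0 : ℝ) 1)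
    (hlam : 0 ≤ lam) (g : ℝ → ℂ)
    (hdiff : ∀ x > (0 : ℝ), DifferentiableAt ℝ g x ∧ DifferentiableAt ℝ (deriv g) x)
    (hode : ∀ x > (0 : ℝ),
      -(deriv (deriv g) x) + ((α * (2 + α) / (4 * x ^ 2) : ℝ) : ℂ) * g x
        = (lam : ℂ) * g x)
    (hL2 : IntegrableOn (fun x : ℝ => ‖g x‖ ^ 2) (Set.Ioi 0)) :
    ∀ x > (0 : ℝ), g x = 0 := by
  intro x hx
  refine eq_zero_of_integrableOn_norm_sq (p := 1 + α / 2) (by linarith [hα.1]) hlam hdiff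
    (fun y hy => ?_) hL2 hx
  have h := hode y hy
  rw [Complex.real_smul]
  push_cast at h ⊢
  linear_combination -h
end
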